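/- arXiv:1109.4359 — 12 statements merged into one kernel-verified Lean document; each statement's English description precedes it below -/
import Mathlib

section
/- If ξ is a real random variable with ξ ≤ 1, E[ξ] ≤ 0 and E[ξ²] = σ², then for every λ ≥ 0, E[e^{λξ}] ≤ (1/(1+σ²))·e^{−λσ²} + (σ²/(1+σ²))·e^{λ}. -/
/-! On `(-∞, 1]` the function `x ↦ exp (λ x)` lies below the quadratic `q` that is tangent to it
at `x = -σ²` and meets it at `x = 1`; this comes down to the monotonicity of
`t ↦ (exp t - 1 - t) / t²`. The linear coefficient of `q` is nonnegative, so `E q(ξ)` is at most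
the expectation of `q` under the two-point law on `{-σ², 1}` with weights `1/(1+σ²)`, `σ²/(1+σ²)`
(mean `0`, second moment `σ²`), which is the right-hand side. -/

open MeasureTheory Real

namespace Real

lemma one_sub_mul_exp_le_one (t : ℝ) : (1 - t) * exp t ≤ 1 := by
  calc (1 - t) * exp t ≤ exp (-t) * exp t := by gcongr; exact one_sub_le_exp_neg t
    _ = 1 := by rw [← exp_add, neg_add_cancel, exp_zero]

lemma monotone_sub_two_mul_exp_add_add_two :
    Monotone fun t : ℝ => (t - 2) * exp t + t + 2 := by
  have hderiv (t : ℝ) :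
      HasDerivAt (fun t : ℝ => (t - 2) * exp t + t + 2) ((t - 1) * exp t + 1) t :=
    ((((hasDerivAt_id t).sub_const 2).mul (hasDerivAt_exp t)).add
      (hasDerivAt_id t)).add_const 2 |>.congr_deriv (by simp only [id_eq]; ring)
  refine monotone_of_deriv_nonneg (fun t => (hderiv t).differentiableAt) fun t => ?_
  rw [(hderiv t).deriv]
  linarith [one_sub_mul_exp_le_one t]

lemma mul_sub_two_mul_exp_add_add_two_nonneg (t : ℝ) :
    0 ≤ t * ((t - 2) * exp t + t + 2) := by
  have hzero : (0 - 2) * exp 0 + 0 + 2 = (0 : ℝ) := by simp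
  rcases le_total 0 t with ht | ht
  · exact mul_nonneg ht (hzero ▸ monotone_sub_two_mul_exp_add_add_two ht)
  · exact mul_nonneg_of_nonpos_of_nonpos ht (hzero ▸ monotone_sub_two_mul_exp_add_add_two ht)

lemma hasDerivAt_exp_sub_one_sub_div_sq {t : ℝ} (ht : t ≠ 0) :
    HasDerivAt (fun t : ℝ => (exp t - 1 - t) / t ^ 2)
      (t * ((t - 2) * exp t + t + 2) / (t ^ 2) ^ 2) t :=
  (((hasDerivAt_exp t).sub_const 1).sub (hasDerivAt_id t)).div (hasDerivAt_pow 2 t)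
    (pow_ne_zero 2 ht) |>.congr_deriv (by simp only [Pi.sub_apply, id_eq]; ring)

lemma monotoneOn_exp_sub_one_sub_div_sq {s : Set ℝ} (hconv : Convex ℝ s) (hopen : IsOpen s)
    (hzero : (0 : ℝ) ∉ s) : MonotoneOn (fun t : ℝ => (exp t - 1 - t) / t ^ 2) s := by
  have hne {t : ℝ} (ht : t ∈ s) : t ≠ 0 := fun h => hzero (h ▸ ht)
  refine monotoneOn_of_deriv_nonneg hconv
    (fun t ht => (hasDerivAt_exp_sub_one_sub_div_sq (hne ht)).continuousAt.continuousWithinAt)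
    (fun t ht => ?_) (fun t ht => ?_) <;> rw [hopen.interior_eq] at ht
  · exact (hasDerivAt_exp_sub_one_sub_div_sq (hne ht)).differentiableAt.differentiableWithinAt
  · rw [(hasDerivAt_exp_sub_one_sub_div_sq (hne ht)).deriv]
    exact div_nonneg (mul_sub_two_mul_exp_add_add_two_nonneg t) (by positivity)

lemma exp_le_quadratic_of_nonpos {x : ℝ} (hx : x ≤ 0) : exp x ≤ 1 + x + x ^ 2 / 2 := by
  -- `(1 + x + x²/2) (1 - x + x²/2) = 1 + x⁴/4 ≥ 1`
  have hneg := quadratic_le_exp_of_nonneg (neg_nonneg.mpr hx)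
  have hprod : exp x * exp (-x) = 1 := by rw [← exp_add, add_neg_cancel, exp_zero]
  nlinarith [exp_pos x, sq_nonneg (x ^ 2)]

lemma exp_sub_one_sub_div_sq_le_half_of_neg {t : ℝ} (ht : t < 0) :
    (exp t - 1 - t) / t ^ 2 ≤ 1 / 2 := by
  rw [div_le_iff₀ (by nlinarith)]
  linarith [exp_le_quadratic_of_nonpos ht.le]

lemma half_le_exp_sub_one_sub_div_sq_of_pos {t : ℝ} (ht : 0 < t) :
    1 / 2 ≤ (exp t - 1 - t) / t ^ 2 := by
  rw [le_div_iff₀ (by positivity)]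
  linarith [quadratic_le_exp_of_nonneg ht.le]

lemma exp_sub_one_sub_div_sq_le {u v : ℝ} (huv : u ≤ v) (hu : u ≠ 0) (hv : v ≠ 0) :
    (exp u - 1 - u) / u ^ 2 ≤ (exp v - 1 - v) / v ^ 2 := by
  have hIio := monotoneOn_exp_sub_one_sub_div_sq (convex_Iio 0) isOpen_Iio (by simp)
  have hIoi := monotoneOn_exp_sub_one_sub_div_sq (convex_Ioi 0) isOpen_Ioi (by simp)
  rcases hu.lt_or_gt with hu | hu
  · rcases hv.lt_or_gt with hv | hv
    · exact hIio hu hv huv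
    · exact (exp_sub_one_sub_div_sq_le_half_of_neg hu).trans
        (half_le_exp_sub_one_sub_div_sq_of_pos hv)
  · exact hIoi hu (hu.trans_le huv) huv

lemma exp_le_one_add_add_mul_div_sq {u v : ℝ} (huv : u ≤ v) (hv : v ≠ 0) :
    exp u ≤ 1 + u + (exp v - 1 - v) * (u / v) ^ 2 := by
  rcases eq_or_ne u 0 with rfl | hu
  · simp
  calc exp u = 1 + u + (exp u - 1 - u) / u ^ 2 * u ^ 2 := by field_simp; ring
    _ ≤ 1 + u + (exp v - 1 - v) / v ^ 2 * u ^ 2 := by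
      gcongr 1 + u + ?_ * _; exact exp_sub_one_sub_div_sq_le huv hu hv
    _ = 1 + u + (exp v - 1 - v) * (u / v) ^ 2 := by ring

lemma exp_mul_le_quadratic_of_le {lam a b x : ℝ} (hlam : 0 ≤ lam) (hab : a < b) (hx : x ≤ b) :
    exp (lam * x) ≤ exp (lam * a) * (1 + lam * (x - a))
      + (exp (lam * b) - exp (lam * a) * (1 + lam * (b - a))) * ((x - a) / (b - a)) ^ 2 := by
  rcases hlam.eq_or_lt with rfl | hlam
  · simp
  have h := exp_le_one_add_add_mul_div_sq (u := lam * (x - a)) (v := lam * (b - a))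
    (by gcongr) (by nlinarith)
  rw [mul_div_mul_left _ _ hlam.ne'] at h
  have hsplit (y : ℝ) : exp (lam * y) = exp (lam * a) * exp (lam * (y - a)) := by
    rw [← exp_add]; ring_nf
  rw [hsplit x, hsplit b]
  calc exp (lam * a) * exp (lam * (x - a))
      ≤ exp (lam * a) * (1 + lam * (x - a) + (exp (lam * (b - a)) - 1 - lam * (b - a))
          * ((x - a) / (b - a)) ^ 2) := by gcongr
    _ = _ := by ring

lemma exists_quadratic_majorant_exp_mul {lam s : ℝ} (hlam : 0 ≤ lam) (hs : 0 ≤ s) :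
    ∃ α β γ : ℝ, 0 ≤ β ∧ (∀ x ≤ 1, exp (lam * x) ≤ α + β * x + γ * x ^ 2) ∧
      α + γ * s = 1 / (1 + s) * exp (-(lam * s)) + s / (1 + s) * exp lam := by
  set E := exp (-(lam * s))
  set γ := (exp lam - E * (1 + lam * (1 + s))) / (1 + s) ^ 2
  have hs1 : 0 < 1 + s := by linarith
  have hγ : 0 ≤ γ := by
    have hsplit : exp lam = E * exp (lam * (1 + s)) := by rw [← exp_add]; ring_nf
    have htangent := add_one_le_exp (lam * (1 + s))
    refine div_nonneg ?_ (by positivity)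
    rw [hsplit]
    nlinarith [exp_pos (-(lam * s))]
  refine ⟨E * (1 + lam * s) + γ * s ^ 2, E * lam + 2 * γ * s, γ, by positivity,
    fun x hx => ?_, by simp only [γ]; field_simp; ring⟩
  calc exp (lam * x)
      ≤ exp (lam * -s) * (1 + lam * (x - -s))
        + (exp (lam * 1) - exp (lam * -s) * (1 + lam * (1 - -s))) * ((x - -s) / (1 - -s)) ^ 2 :=
        exp_mul_le_quadratic_of_le hlam (by linarith) hx
    _ = _ := by simp only [E, γ, mul_neg, mul_one, sub_neg_eq_add]; field_simp; ring

end Real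

namespace MeasureTheory

lemma integral_le_of_ae_le_quadratic {Ω : Type*} [MeasurableSpace Ω] {μ : Measure Ω}
    [IsProbabilityMeasure μ] {ξ f : Ω → ℝ} (hξ : Integrable ξ μ)
    (hξ2 : Integrable (fun ω => ξ ω ^ 2) μ) (hf : Integrable f μ) {α β γ : ℝ}
    (hle : ∀ᵐ ω ∂μ, f ω ≤ α + β * ξ ω + γ * ξ ω ^ 2) :
    ∫ ω, f ω ∂μ ≤ α + β * ∫ ω, ξ ω ∂μ + γ * ∫ ω, ξ ω ^ 2 ∂μ := by
  have hlin : Integrable (fun ω => α + β * ξ ω) μ := (integrable_const α).add (hξ.const_mul β)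
  calc ∫ ω, f ω ∂μ ≤ ∫ ω, (α + β * ξ ω + γ * ξ ω ^ 2) ∂μ :=
        integral_mono_ae hf (hlin.add (hξ2.const_mul γ)) hle
    _ = _ := by
      rw [integral_add hlin (hξ2.const_mul γ), integral_add (integrable_const α)
        (hξ.const_mul β), integral_const, integral_const_mul, integral_const_mul]
      simp

end MeasureTheory

theorem bennett_mgf_bound_general {Ω : Type*} [MeasurableSpace Ω] (μ : Measure Ω)
    [IsProbabilityMeasure μ] (ξ : Ω → ℝ) (σ : ℝ)
    (hbound : ∀ᵐ ω ∂μ, ξ ω ≤ 1)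
    (hint : Integrable ξ μ) (hint2 : Integrable (fun ω => (ξ ω)^2) μ)
    (hmean : ∫ ω, ξ ω ∂μ ≤ 0)
    (hvar : ∫ ω, (ξ ω)^2 ∂μ = σ^2)
    (lam : ℝ) (hlam : 0 ≤ lam) :
    ∫ ω, Real.exp (lam * ξ ω) ∂μ ≤
      (1/(1+σ^2)) * Real.exp (-(lam * σ^2)) + (σ^2/(1+σ^2)) * Real.exp lam := by
  obtain ⟨α, β, γ, hβ, hmaj, hval⟩ := exists_quadratic_majorant_exp_mul hlam (sq_nonneg σ)
  calc ∫ ω, exp (lam * ξ ω) ∂μ ≤ α + β * ∫ ω, ξ ω ∂μ + γ * ∫ ω, ξ ω ^ 2 ∂μ :=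
        integral_le_of_ae_le_quadratic hint hint2
          (ProbabilityTheory.integrable_exp_mul_of_le lam 1 hlam hint.aemeasurable hbound)
          (hbound.mono fun ω => hmaj (ξ ω))
    _ ≤ α + γ * σ ^ 2 := by rw [hvar]; linarith [mul_nonpos_of_nonneg_of_nonpos hβ hmean]
    _ = _ := hval

theorem bennett_mgf_bound {Ω : Type*} [MeasurableSpace Ω] (μ : Measure Ω)
    [IsProbabilityMeasure μ] (ξ : Ω → ℝ) (σ : ℝ)
    (hmeas : Measurable ξ)
    (hbound : ∀ᵐ ω ∂μ, ξ ω ≤ 1)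
    (hint : Integrable ξ μ) (hint2 : Integrable (fun ω => (ξ ω)^2) μ)
    (hmean : ∫ ω, ξ ω ∂μ ≤ 0)
    (hvar : ∫ ω, (ξ ω)^2 ∂μ = σ^2)
    (lam : ℝ) (hlam : 0 ≤ lam) :
    ∫ ω, Real.exp (lam * ξ ω) ∂μ ≤
      (1/(1+σ^2)) * Real.exp (-(lam * σ^2)) + (σ^2/(1+σ^2)) * Real.exp lam :=
  bennett_mgf_bound_general μ ξ σ hbound hint hint2 hmean hvar lam hlam
end

section
/- For every λ > 0, the quadratic function φ(u) = a u² + b u + c, where a = (e^λ − e^{−λσ²} − λ(1+σ²)e^{−λσ²})/(1+σ²)², b = (λ(1−σ⁴)e^{−λσ²} + 2σ²(e^λ − e^{−λσ²}))/(1+σ²)², c = (σ⁴e^λ + (1 + 2σ² + λσ² + λσ⁴)e^{−λσ²})/(1+σ²)², satisfies e^{λu} ≤ φ(u) for all u ≤ 1. -/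
/-!
With `t = λ (u + σ²)`, `T = λ (1 + σ²)` and after multiplying by `e^{λσ²}`, the claim becomes
`e^t ≤ 1 + t + (t / T)² (e^T - 1 - T)` for `t ≤ T`, the right side being the quadratic that
agrees with `e^t` to first order at `0` and in value at `T`. For `0 ≤ t ≤ T` this holds termwise
in the exponential series, since `(t / T)ⁿ ≤ (t / T)²` for `n ≥ 2`; for `t ≤ 0` it follows from
`e^t ≤ 1 + t + t² / 2` and `e^T - 1 - T ≥ T² / 2`.
-/

open Real

theorem Real.hasSum_exp_sub_one_sub (x : ℝ) :
    HasSum (fun n : ℕ => x ^ (n + 2) / (n + 2).factorial) (exp x - 1 - x) := by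
  have h := NormedSpace.expSeries_div_hasSum_exp x
  rw [← exp_eq_exp_ℝ, ← hasSum_nat_add_iff' 2] at h
  simpa [Finset.sum_range_succ, sub_sub] using h

theorem Real.exp_mul_sub_one_sub_le {r x : ℝ} (hr : |r| ≤ 1) (hx : 0 ≤ x) :
    exp (r * x) - 1 - r * x ≤ r ^ 2 * (exp x - 1 - x) := by
  refine hasSum_le (fun n => ?_) (hasSum_exp_sub_one_sub (r * x))
    ((hasSum_exp_sub_one_sub x).mul_left (r ^ 2))
  have hpow : r ^ (n + 2) ≤ r ^ 2 := calc
    r ^ (n + 2) ≤ |r| ^ n * |r| ^ 2 := by rw [← pow_add, ← abs_pow]; exact le_abs_self _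
    _ ≤ 1 * |r| ^ 2 := by gcongr; exact pow_le_one₀ (abs_nonneg r) hr
    _ = r ^ 2 := by simp
  calc (r * x) ^ (n + 2) / (n + 2).factorial
      = r ^ (n + 2) * (x ^ (n + 2) / (n + 2).factorial) := by ring
    _ ≤ r ^ 2 * (x ^ (n + 2) / (n + 2).factorial) := by gcongr

theorem Real.exp_le_one_add_add_sq_div_two {x : ℝ} (hx : x ≤ 0) : exp x ≤ 1 + x + x ^ 2 / 2 := by
  have hderiv (y : ℝ) : HasDerivAt (fun y => 1 + y + y ^ 2 / 2 - exp y) (1 + y - exp y) y :=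
    ((((hasDerivAt_id y).const_add 1).add ((hasDerivAt_pow 2 y).div_const 2)).sub
      (hasDerivAt_exp y)).congr_deriv (by simp)
  have hanti : Antitone (fun y => 1 + y + y ^ 2 / 2 - exp y) :=
    antitone_of_hasDerivAt_nonpos hderiv fun y =>
      show _ ≤ (0 : ℝ) by linarith [add_one_le_exp y]
  simpa using hanti hx

theorem Real.exp_le_one_add_add_div_sq_mul {t T : ℝ} (hT : 0 < T) (htT : t ≤ T) :
    exp t ≤ 1 + t + (t / T) ^ 2 * (exp T - 1 - T) := by
  rcases le_total 0 t with ht | ht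
  · have hr : |t / T| ≤ 1 := by
      rw [abs_of_nonneg (by positivity)]
      exact div_le_one_of_le₀ htT hT.le
    have h := exp_mul_sub_one_sub_le hr hT.le
    rw [div_mul_cancel₀ t hT.ne'] at h
    linarith
  · have hquad : T ^ 2 / 2 ≤ exp T - 1 - T := by linarith [quadratic_le_exp_of_nonneg hT.le]
    calc exp t ≤ 1 + t + t ^ 2 / 2 := exp_le_one_add_add_sq_div_two ht
      _ = 1 + t + (t / T) ^ 2 * (T ^ 2 / 2) := by field_simp
      _ ≤ 1 + t + (t / T) ^ 2 * (exp T - 1 - T) := by gcongr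

theorem quadratic_dominates_exp_general (σ : ℝ) (lam : ℝ) (hlam : 0 < lam) :
    ∀ u ≤ (1:ℝ),
      Real.exp (lam * u) ≤
        ((Real.exp lam - Real.exp (-(lam * σ^2)) - lam * (1+σ^2) * Real.exp (-(lam * σ^2)))
          / (1+σ^2)^2) * u^2
        + ((lam * (1-σ^4) * Real.exp (-(lam * σ^2))
            + 2*σ^2*(Real.exp lam - Real.exp (-(lam * σ^2)))) / (1+σ^2)^2) * u
        + ((σ^4 * Real.exp lam + (1 + 2*σ^2 + lam*σ^2 + lam*σ^4) * Real.exp (-(lam * σ^2)))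
            / (1+σ^2)^2) := by
  intro u hu
  have hT : 0 < lam * (1 + σ ^ 2) := by positivity
  have hle : lam * (u + σ ^ 2) ≤ lam * (1 + σ ^ 2) := by gcongr
  have hshift (x : ℝ) : exp (lam * (x + σ ^ 2)) = exp (lam * x) * exp (lam * σ ^ 2) := by
    rw [← exp_add]; ring_nf
  calc exp (lam * u) = exp (lam * (u + σ ^ 2)) * exp (-(lam * σ ^ 2)) := by
        rw [← exp_add]; ring_nf
    _ ≤ (1 + lam * (u + σ ^ 2) + (lam * (u + σ ^ 2) / (lam * (1 + σ ^ 2))) ^ 2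
          * (exp (lam * (1 + σ ^ 2)) - 1 - lam * (1 + σ ^ 2))) * exp (-(lam * σ ^ 2)) := by
        gcongr; exact exp_le_one_add_add_div_sq_mul hT hle
    _ = _ := by
        rw [hshift, exp_neg, mul_one]
        field_simp
        ring

theorem quadratic_dominates_exp (σ : ℝ) (hσ : 0 ≤ σ) (lam : ℝ) (hlam : 0 < lam) :
    ∀ u ≤ (1:ℝ),
      Real.exp (lam * u) ≤
        ((Real.exp lam - Real.exp (-(lam * σ^2)) - lam * (1+σ^2) * Real.exp (-(lam * σ^2)))
          / (1+σ^2)^2) * u^2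
        + ((lam * (1-σ^4) * Real.exp (-(lam * σ^2))
            + 2*σ^2*(Real.exp lam - Real.exp (-(lam * σ^2)))) / (1+σ^2)^2) * u
        + ((σ^4 * Real.exp lam + (1 + 2*σ^2 + lam*σ^2 + lam*σ^4) * Real.exp (-(lam * σ^2)))
            / (1+σ^2)^2) :=
  quadratic_dominates_exp_general σ lam hlam
end

section
/- Define f(λ,t) = log((1/(1+t))e^{−λt} + (t/(1+t))e^{λ}) for λ ≥ 0 and t ≥ 0. Then for every λ > 0 and t ≥ 0, the partial derivative ∂f/∂t(λ,t) is strictly positive. -/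
open Real

theorem f_deriv_t_pos (lam : ℝ) (hlam : 0 < lam) (t : ℝ) (ht : 0 ≤ t) :
    0 < deriv (fun s : ℝ =>
        Real.log ((1/(1+s)) * Real.exp (-(lam * s)) + (s/(1+s)) * Real.exp lam)) t := by
  have h1 : (0:ℝ) < 1 + t := by linarith
  have hne : (1 + t) ≠ 0 := h1.ne'
  have hA : HasDerivAt (fun s : ℝ => 1 + s) 1 t := by
    simpa using (hasDerivAt_id t).const_add 1
  have hV : HasDerivAt (fun s : ℝ => 1/(1+s))
      ((0 * (1+t) - 1 * 1)/(1+t)^2) t :=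
    (hasDerivAt_const t 1).div hA hne
  have hW : HasDerivAt (fun s : ℝ => s/(1+s))
      ((1 * (1+t) - t * 1)/(1+t)^2) t :=
    (hasDerivAt_id t).div hA hne
  have hE : HasDerivAt (fun s : ℝ => Real.exp (-(lam * s)))
      (Real.exp (-(lam*t)) * (-lam)) t := by
    have h := ((hasDerivAt_id t).const_mul lam).neg
    simpa using h.exp
  have hF : HasDerivAt (fun s : ℝ =>
        (1/(1+s)) * Real.exp (-(lam * s)) + (s/(1+s)) * Real.exp lam)
      ((0 * (1+t) - 1 * 1)/(1+t)^2 * Real.exp (-(lam*t))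
        + (1/(1+t)) * (Real.exp (-(lam*t)) * (-lam))
        + ((1 * (1+t) - t * 1)/(1+t)^2 * Real.exp lam)) t := by
    exact (hV.mul hE).add (hW.mul_const _)
  have hFpos : (0:ℝ) < (1/(1+t)) * Real.exp (-(lam*t)) + (t/(1+t)) * Real.exp lam := by
    have := Real.exp_pos (-(lam*t))
    have := Real.exp_pos lam
    have ht' : 0 ≤ t/(1+t) := div_nonneg ht h1.le
    positivity
  have hL := hF.log hFpos.ne'
  rw [hL.deriv]
  apply div_pos _ hFpos
  have key : lam * (1+t) + 1 < Real.exp (lam * (1+t)) :=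
    Real.add_one_lt_exp (by positivity)
  have hexp : Real.exp (lam * (1+t)) = Real.exp lam * Real.exp (lam * t) := by
    rw [← Real.exp_add]; ring_nf
  have hmul : Real.exp (-(lam*t)) * Real.exp (lam*t) = 1 := by
    rw [← Real.exp_add]; simp
  have hp1 : (0:ℝ) < Real.exp (-(lam*t)) := Real.exp_pos _
  have hp2 : (0:ℝ) < Real.exp (lam*t) := Real.exp_pos _
  have hp3 : (0:ℝ) < Real.exp lam := Real.exp_pos _
  have hsq : (0:ℝ) < (1+t)^2 := by positivity
  have heq : (0 * (1 + t) - 1 * 1) / (1 + t) ^ 2 * rexp (-(lam * t)) + 1 / (1 + t) * (rexp (-(lam * t)) * -lam) +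
      (1 * (1 + t) - t * 1) / (1 + t) ^ 2 * rexp lam
      = (Real.exp lam - Real.exp (-(lam*t)) * (1 + lam*(1+t))) / (1+t)^2 := by
    field_simp
    ring
  rw [heq]
  apply div_pos _ hsq
  nlinarith [mul_lt_mul_of_pos_right key hp1, hmul, hexp]
end

section
/- Define f(λ,t) = log((1/(1+t))e^{−λt} + (t/(1+t))e^{λ}) for λ ≥ 0 and t ≥ 0. Then for every λ > 0 and t ≥ 0, the second partial derivative ∂²f/∂t²(λ,t) is strictly negative; in particular, for each fixed λ > 0, t ↦ f(λ,t) is strictly concave on [0,∞). -/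
/-!
Factoring out `exp λ` writes `f(λ, s) = λ + log (q s) - log (1 + s)` with
`q s = exp (-λ (1 + s)) + s` (`LogMix.num`), so that with `w = exp (-λ (1 + s))`
`∂²f/∂s² = (λ² s w + 2 λ w - 1) / q² + 1 / (1 + s)²`.
Clearing denominators and putting `x = λ (1 + s)`, negativity becomes
`s · w (x² + 2x + 2) + (2 x w + w²) < 2 s + 1`, which splits into
`e^{-x} (x² + 2x + 2) ≤ 2` (the quadratic Taylor bound for `exp`) and
`2 x e^{-x} + e^{-2x} < 1` (that is, `x < sinh x`).
-/

open Real Filter Topology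

lemma exp_neg_mul_quadratic_le_two {x : ℝ} (hx : 0 ≤ x) :
    exp (-x) * (x ^ 2 + 2 * x + 2) ≤ 2 := by
  have h := quadratic_le_exp_of_nonneg hx
  have hmul : exp (-x) * exp x = 1 := by rw [← exp_add, neg_add_cancel, exp_zero]
  nlinarith [exp_pos (-x)]

lemma two_mul_mul_exp_neg_add_exp_neg_sq_lt_one {x : ℝ} (hx : 0 < x) :
    2 * x * exp (-x) + exp (-x) ^ 2 < 1 := by
  have h : x < sinh x := self_lt_sinh_iff.2 hx
  have hmul : exp (-x) * exp x = 1 := by rw [← exp_add, neg_add_cancel, exp_zero]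
  rw [sinh_eq] at h
  nlinarith [exp_pos (-x)]

lemma deriv_deriv_eq_of_hasDerivAt {f f' : ℝ → ℝ} {x f'' : ℝ}
    (hf : ∀ᶠ y in 𝓝 x, HasDerivAt f (f' y) y) (hf' : HasDerivAt f' f'' x) :
    deriv (deriv f) x = f'' := by
  have h : deriv f =ᶠ[𝓝 x] f' := hf.mono fun y hy => hy.deriv
  rw [h.deriv_eq, hf'.deriv]

noncomputable section

namespace LogMix

variable {lam s : ℝ}

def logMix (lam s : ℝ) : ℝ :=
  log ((1 / (1 + s)) * exp (-(lam * s)) + (s / (1 + s)) * exp lam)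

def num (lam s : ℝ) : ℝ := exp (-(lam * (1 + s))) + s

def logMixDeriv (lam s : ℝ) : ℝ :=
  (1 - lam * exp (-(lam * (1 + s)))) / num lam s - 1 / (1 + s)

def logMixDeriv2 (lam s : ℝ) : ℝ :=
  (lam ^ 2 * s * exp (-(lam * (1 + s))) + 2 * lam * exp (-(lam * (1 + s))) - 1) / num lam s ^ 2
    + 1 / (1 + s) ^ 2

lemma num_pos (hs : 0 ≤ s) : 0 < num lam s := by
  unfold num; positivity

lemma logMix_eq (h1 : 0 < 1 + s) (hq : 0 < num lam s) :
    logMix lam s = lam + log (num lam s) - log (1 + s) := by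
  have harg : (1 / (1 + s)) * exp (-(lam * s)) + (s / (1 + s)) * exp lam
      = exp lam * (num lam s / (1 + s)) := by
    have : exp lam * exp (-(lam * (1 + s))) = exp (-(lam * s)) := by
      rw [← exp_add]; ring_nf
    rw [num, mul_div_assoc', mul_add, this]
    ring
  rw [logMix, harg, log_mul (exp_pos lam).ne' (div_pos hq h1).ne', log_exp,
    log_div hq.ne' h1.ne', add_sub_assoc]

lemma eventually_pos (h1 : 0 < 1 + s) (hq : 0 < num lam s) :
    ∀ᶠ y in 𝓝 s, 0 < 1 + y ∧ 0 < num lam y := by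
  have hcont : Continuous (num lam) := by unfold num; fun_prop
  exact (continuousAt_const.eventually_lt (continuous_const.add continuous_id).continuousAt h1).and
    (continuousAt_const.eventually_lt hcont.continuousAt hq)

lemma hasDerivAt_exp_neg_mul_one_add (s : ℝ) :
    HasDerivAt (fun y => exp (-(lam * (1 + y)))) (-lam * exp (-(lam * (1 + s)))) s := by
  have h : HasDerivAt (fun y => -(lam * (1 + y))) (-lam) s := by
    simpa using (((hasDerivAt_id s).const_add 1).const_mul lam).fun_neg
  simpa [mul_comm] using h.exp

lemma hasDerivAt_num (s : ℝ) :
    HasDerivAt (num lam) (1 - lam * exp (-(lam * (1 + s)))) s := by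
  exact ((hasDerivAt_exp_neg_mul_one_add s).fun_add (hasDerivAt_id' s)).congr_deriv (by ring)

lemma hasDerivAt_logMix (h1 : 0 < 1 + s) (hq : 0 < num lam s) :
    HasDerivAt (logMix lam) (logMixDeriv lam s) s := by
  have hlog : HasDerivAt (fun y => lam + log (num lam y) - log (1 + y)) (logMixDeriv lam s) s := by
    refine ((((hasDerivAt_num s).log hq.ne').const_add lam).fun_sub
      (((hasDerivAt_id' s).const_add 1).log h1.ne')).congr_deriv ?_
    simp [logMixDeriv]
  exact hlog.congr_of_eventuallyEq
    ((eventually_pos h1 hq).mono fun y hy => logMix_eq hy.1 hy.2)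

lemma hasDerivAt_logMixDeriv (h1 : 0 < 1 + s) (hq : 0 < num lam s) :
    HasDerivAt (logMixDeriv lam) (logMixDeriv2 lam s) s := by
  have hN := ((hasDerivAt_exp_neg_mul_one_add (lam := lam) s).const_mul lam).const_sub 1
  refine ((hN.fun_div (hasDerivAt_num s) hq.ne').fun_sub
    ((hasDerivAt_const s 1).fun_div ((hasDerivAt_id' s).const_add 1) h1.ne')).congr_deriv ?_
  simp only [logMixDeriv2, num]
  field_simp
  ring

lemma logMixDeriv2_neg (hlam : 0 < lam) (hs : 0 ≤ s) : logMixDeriv2 lam s < 0 := by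
  set x := lam * (1 + s) with hx
  set w := exp (-x)
  have hx0 : 0 < x := by positivity
  have hq : 0 < num lam s := num_pos hs
  have hkey : (1 + s) ^ 2 * (lam ^ 2 * s * w + 2 * lam * w - 1) + num lam s ^ 2 < 0 := by
    have hq2 := exp_neg_mul_quadratic_le_two hx0.le
    have hlin := two_mul_mul_exp_neg_add_exp_neg_sq_lt_one hx0
    have hexpand : (1 + s) ^ 2 * (lam ^ 2 * s * w + 2 * lam * w - 1) + num lam s ^ 2
        = s * (w * (x ^ 2 + 2 * x + 2)) + (2 * x * w + w ^ 2) - (1 + 2 * s) := by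
      simp only [num, hx, w]; ring
    rw [hexpand]
    linarith [mul_le_mul_of_nonneg_left hq2 hs]
  rw [logMixDeriv2, div_add_div _ _ (by positivity) (by positivity)]
  exact div_neg_of_neg_of_pos (by linarith) (by positivity)

end LogMix

end

open LogMix in
theorem f_second_deriv_t_neg (lam : ℝ) (hlam : 0 < lam) :
    (∀ t : ℝ, 0 ≤ t →
      deriv (deriv (fun s : ℝ =>
        Real.log ((1/(1+s)) * Real.exp (-(lam * s)) + (s/(1+s)) * Real.exp lam))) t < 0)
    ∧ StrictConcaveOn ℝ (Set.Ici (0:ℝ)) (fun s : ℝ =>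
        Real.log ((1/(1+s)) * Real.exp (-(lam * s)) + (s/(1+s)) * Real.exp lam)) := by
  change (∀ t : ℝ, 0 ≤ t → deriv (deriv (logMix lam)) t < 0) ∧
    StrictConcaveOn ℝ (Set.Ici 0) (logMix lam)
  have h1 {t : ℝ} (ht : 0 ≤ t) : 0 < 1 + t := by linarith
  have hderiv2 {t : ℝ} (ht : 0 ≤ t) : deriv (deriv (logMix lam)) t < 0 := by
    rw [deriv_deriv_eq_of_hasDerivAt
      ((eventually_pos (h1 ht) (num_pos ht)).mono fun y hy => hasDerivAt_logMix hy.1 hy.2)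
      (hasDerivAt_logMixDeriv (h1 ht) (num_pos ht))]
    exact logMixDeriv2_neg hlam ht
  refine ⟨fun t ht => hderiv2 ht, strictConcaveOn_of_deriv2_neg' (convex_Ici 0) ?_ ?_⟩
  · exact fun t ht =>
      (hasDerivAt_logMix (h1 ht) (num_pos ht)).continuousAt.continuousWithinAt
  · exact fun t ht => hderiv2 ht
end

section
/- For every λ ≥ 0 and t ≥ 0, f(λ,t) ≤ (e^{λ} − 1 − λ)·t, where f(λ,t) = log((1/(1+t))e^{−λt} + (t/(1+t))e^{λ}). -/
open Real

lemma exp_neg_le_quadratic {s : ℝ} (hs : 0 ≤ s) :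
    Real.exp (-s) ≤ 1 - s + s ^ 2 / 2 := by
  have h := Real.quadratic_le_exp_of_nonneg hs
  have h1 : Real.exp (-s) * Real.exp s = 1 := by
    rw [← Real.exp_add]; simp
  have h2 : 0 < Real.exp (-s) := Real.exp_pos _
  nlinarith [sq_nonneg s, sq_nonneg (s ^ 2)]

theorem f_le_freedman (lam : ℝ) (hlam : 0 ≤ lam) (t : ℝ) (ht : 0 ≤ t) :
    Real.log ((1/(1+t)) * Real.exp (-(lam * t)) + (t/(1+t)) * Real.exp lam)
      ≤ (Real.exp lam - 1 - lam) * t := by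
  have h1t : 0 < 1 + t := by linarith
  set X := Real.exp (-(lam * t)) with hX
  set Y := Real.exp lam with hY
  have hXpos : 0 < X := Real.exp_pos _
  have hYpos : 0 < Y := Real.exp_pos _
  have hApos : 0 < (1/(1+t)) * X + (t/(1+t)) * Y := by positivity
  have hlog := Real.log_le_sub_one_of_pos hApos
  have hq : 1 + lam + lam ^ 2 / 2 ≤ Y := Real.quadratic_le_exp_of_nonneg hlam
  have hn : X ≤ 1 - lam * t + (lam * t) ^ 2 / 2 := exp_neg_le_quadratic (by positivity)
  have hq2 : 0 ≤ Y - 1 - lam - lam ^ 2 / 2 := by linarith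
  have key : X + t * Y - (1 + t) ≤ (1 + t) * ((Y - 1 - lam) * t) := by
    nlinarith [mul_nonneg (mul_nonneg ht ht) hq2]
  have hAeq : (1/(1+t)) * X + (t/(1+t)) * Y = (X + t * Y) / (1 + t) := by
    field_simp
  calc Real.log ((1/(1+t)) * X + (t/(1+t)) * Y)
      ≤ (1/(1+t)) * X + (t/(1+t)) * Y - 1 := hlog
    _ ≤ (Real.exp lam - 1 - lam) * t := by
        rw [hAeq, sub_le_iff_le_add, div_le_iff₀ h1t]
        nlinarith [key]
end

section
/- For each fixed λ ≥ 0, the function t ↦ f(λ,t)/t is nonincreasing on (0,∞), where f(λ,t) = log((1/(1+t))e^{−λt} + (t/(1+t))e^{λ}). -/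
/-!
Factoring out `exp λ`, `f(λ,t) = λ + log (exp (-λ(1+t)) + t) - log (1+t)`. Writing
`s = exp (-λ(1+t))` and `x = λ(1+t)`, the second `t`-derivative is nonpositive iff
`(s+t)² + (2x(1+t) + x²t)s ≤ (1+t)²`, which is `x ≤ sinh x` plus `t` times
`1 + x + x²/2 ≤ exp x`. So `f(λ,·)` is concave on `[0,∞)` and vanishes at `0`, and `f(λ,t)/t` is
its slope from the origin.
-/

open Real Set

lemma exp_neg_sq_add_two_mul_mul_exp_neg_le_one {x : ℝ} (hx : 0 ≤ x) :
    exp (-x) ^ 2 + 2 * x * exp (-x) ≤ 1 := by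
  have hsinh : x ≤ (exp x - exp (-x)) / 2 := sinh_eq x ▸ self_le_sinh_iff.2 hx
  have hinv : exp x * exp (-x) = 1 := by rw [← exp_add, add_neg_cancel, exp_zero]
  nlinarith [mul_le_mul_of_nonneg_left hsinh (exp_pos (-x)).le]

lemma quadratic_mul_exp_neg_le_two {x : ℝ} (hx : 0 ≤ x) :
    (x ^ 2 + 2 * x + 2) * exp (-x) ≤ 2 := by
  have hinv : exp x * exp (-x) = 1 := by rw [← exp_add, add_neg_cancel, exp_zero]
  nlinarith [mul_le_mul_of_nonneg_right (quadratic_le_exp_of_nonneg hx) (exp_pos (-x)).le]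

lemma exp_neg_add_sq_add_le_one_add_sq {x t : ℝ} (hx : 0 ≤ x) (ht : 0 ≤ t) :
    (exp (-x) + t) ^ 2 + (2 * x * (1 + t) + x ^ 2 * t) * exp (-x) ≤ (1 + t) ^ 2 := by
  linear_combination exp_neg_sq_add_two_mul_mul_exp_neg_le_one hx
    + t * quadratic_mul_exp_neg_le_two hx

lemma ConcaveOn.antitoneOn_div_of_map_zero {𝕜 : Type*} [Field 𝕜] [LinearOrder 𝕜]
    [IsStrictOrderedRing 𝕜] {f : 𝕜 → 𝕜} (hf : ConcaveOn 𝕜 (Ici 0) f) (h0 : f 0 = 0) :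
    AntitoneOn (fun t => f t / t) (Ioi 0) := by
  intro a ha b hb hab
  simpa [slope_def_field, h0] using
    hf.antitoneOn_slope_gt self_mem_Ici ⟨le_of_lt ha, ha⟩ ⟨le_of_lt hb, hb⟩ hab

/-- The cumulant generating function of the centred law with mass `1/(1+t)` at `-t` and
`t/(1+t)` at `1`. -/
noncomputable def twoPointCGF (lam t : ℝ) : ℝ :=
  log ((1 / (1 + t)) * exp (-(lam * t)) + (t / (1 + t)) * exp lam)

lemma twoPointCGF_zero (lam : ℝ) : twoPointCGF lam 0 = 0 := by
  simp [twoPointCGF]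

lemma twoPointCGF_eq {lam t : ℝ} (ht : 0 ≤ t) :
    twoPointCGF lam t = lam + (log (exp (-(lam * (1 + t))) + t) - log (1 + t)) := by
  have hsum : 0 < exp (-(lam * (1 + t))) + t := by positivity
  have hfactor : (1 / (1 + t)) * exp (-(lam * t)) + (t / (1 + t)) * exp lam
      = exp lam * (exp (-(lam * (1 + t))) + t) / (1 + t) := by
    rw [mul_add, ← exp_add]
    ring_nf
  rw [twoPointCGF, hfactor, log_div (by positivity) (by positivity),
    log_mul (exp_pos _).ne' hsum.ne', log_exp]
  ring

lemma hasDerivAt_exp_neg_mul_one_add (lam t : ℝ) :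
    HasDerivAt (fun t => exp (-(lam * (1 + t)))) (-lam * exp (-(lam * (1 + t)))) t := by
  have := (((hasDerivAt_id t).const_add 1).const_mul lam).neg.exp
  simpa [mul_comm] using this

lemma concaveOn_log_exp_neg_mul_add_sub_log {lam : ℝ} (hlam : 0 ≤ lam) :
    ConcaveOn ℝ (Ici 0) (fun t => log (exp (-(lam * (1 + t))) + t) - log (1 + t)) := by
  set s : ℝ → ℝ := fun t => exp (-(lam * (1 + t)))
  have hs : ∀ t, HasDerivAt s (-lam * s t) t := hasDerivAt_exp_neg_mul_one_add lam
  have hsum : ∀ t ∈ Ici (0 : ℝ), 0 < s t + t := fun t ht => add_pos_of_pos_of_nonneg (exp_pos _) ht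
  have h1t : ∀ t ∈ Ici (0 : ℝ), 0 < 1 + t := fun t (ht : 0 ≤ t) => by linarith
  have hderiv : ∀ t ∈ Ici (0 : ℝ), HasDerivAt (fun t => log (s t + t) - log (1 + t))
      ((1 - lam * s t) / (s t + t) - 1 / (1 + t)) t := by
    intro t ht
    have hnum := ((hs t).add (hasDerivAt_id t)).log (hsum t ht).ne'
    have hden := ((hasDerivAt_id t).const_add 1).log (h1t t ht).ne'
    refine (hnum.sub hden).congr_deriv ?_
    simp only [Pi.add_apply, id]
    ring
  have hderiv2 : ∀ t ∈ Ici (0 : ℝ), HasDerivAt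
      (fun t => (1 - lam * s t) / (s t + t) - 1 / (1 + t))
      (1 / (1 + t) ^ 2 - (1 - 2 * lam * s t - lam ^ 2 * s t * t) / (s t + t) ^ 2) t := by
    intro t ht
    have hnum := (((hs t).const_mul lam).const_sub 1).div ((hs t).add (hasDerivAt_id t))
      (hsum t ht).ne'
    have hden := (hasDerivAt_const t (1 : ℝ)).div ((hasDerivAt_id t).const_add 1) (h1t t ht).ne'
    refine (hnum.sub hden).congr_deriv ?_
    simp only [Pi.add_apply, id]
    field_simp
    ring
  refine concaveOn_of_hasDerivWithinAt2_nonpos (convex_Ici 0)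
    (fun t ht => (hderiv t ht).continuousAt.continuousWithinAt)
    (fun t ht => (hderiv t (interior_subset ht)).hasDerivWithinAt)
    (fun t ht => (hderiv2 t (interior_subset ht)).hasDerivWithinAt) fun t ht => ?_
  have ht : 0 ≤ t := interior_subset ht
  have key : (s t + t) ^ 2 + (2 * (lam * (1 + t)) * (1 + t) + (lam * (1 + t)) ^ 2 * t) * s t
      ≤ (1 + t) ^ 2 := exp_neg_add_sq_add_le_one_add_sq (mul_nonneg hlam (h1t t ht).le) ht
  rw [sub_nonpos, div_le_div_iff₀ (pow_pos (h1t t ht) 2) (pow_pos (hsum t ht) 2)]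
  linear_combination key

lemma concaveOn_twoPointCGF {lam : ℝ} (hlam : 0 ≤ lam) : ConcaveOn ℝ (Ici 0) (twoPointCGF lam) :=
  ((concaveOn_const lam (convex_Ici 0)).add (concaveOn_log_exp_neg_mul_add_sub_log hlam)).congr
    fun _ ht => (twoPointCGF_eq ht).symm

theorem f_div_t_antitone (lam : ℝ) (hlam : 0 ≤ lam) :
    AntitoneOn (fun t : ℝ =>
        Real.log ((1/(1+t)) * Real.exp (-(lam * t)) + (t/(1+t)) * Real.exp lam) / t)
      (Set.Ioi (0:ℝ)) :=
  (concaveOn_twoPointCGF hlam).antitoneOn_div_of_map_zero (twoPointCGF_zero lam)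
end

section
/- Let (ξ_i, F_i)_{i=1,...,n} be supermartingale differences with ξ_i ≤ 1 a.s., and let Ψ_k(λ) = Σ_{i=1}^k log E[e^{λξ_i} | F_{i-1}] and ⟨X⟩_k = Σ_{i=1}^k E[ξ_i² | F_{i-1}]. Then for every λ ≥ 0 and 1 ≤ k ≤ n, Ψ_k(λ) ≤ k·f(λ, ⟨X⟩_k/k) almost surely, where f(λ,t) = log((1/(1+t))e^{−λt} + (t/(1+t))e^{λ}). -/
/-!
For `t ≥ 0`, the quadratic in `x` that touches `exp (lam * x)` at `x = -t` and meets it again at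
`x = 1` dominates `exp (lam * x)` on `x ≤ 1`, because `(exp u - 1 - u) / u ^ 2` is nondecreasing.
Choosing `t = v := E[ξ_i² | F_{i-1}]`, which is `F_{i-1}`-measurable, the coefficients of this
quadratic pull out of the conditional expectation, and `E[ξ_i | F_{i-1}] ≤ 0` leaves
`E[exp (lam * ξ_i) | F_{i-1}] ≤ exp (f lam v)`, where `f lam t` is the cumulant generating function
of the centred two-point law on `{-t, 1}`. Summing over `i` and applying Jensen's inequality to the
concave function `t ↦ f lam t` gives the bound; concavity comes down to `s ≤ sinh s` for `s ≥ 0`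
and the Taylor bound `1 + s + s ^ 2 / 2 ≤ exp s`.
-/

open MeasureTheory Real Finset Filter

theorem exp_sub_one_sub_eq_sq_mul_integral (x : ℝ) :
    exp x - 1 - x = x ^ 2 * ∫ θ in (0 : ℝ)..1, (1 - θ) * exp (θ * x) := by
  rcases eq_or_ne x 0 with rfl | hx
  · simp
  have hderiv : ∀ θ ∈ Set.uIcc (0 : ℝ) 1,
      HasDerivAt (fun θ => (1 - θ) * exp (θ * x) / x + exp (θ * x) / x ^ 2)
        ((1 - θ) * exp (θ * x)) θ := by
    intro θ _
    have hexp : HasDerivAt (fun θ => exp (θ * x)) (exp (θ * x) * x) θ := by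
      simpa using ((hasDerivAt_id θ).mul_const x).exp
    have hlin : HasDerivAt (fun θ : ℝ => 1 - θ) (-1) θ := by
      simpa using (hasDerivAt_id θ).const_sub 1
    refine (((hlin.mul hexp).div_const x).add (hexp.div_const (x ^ 2))).congr_deriv ?_
    field_simp
    ring
  rw [intervalIntegral.integral_eq_sub_of_hasDerivAt hderiv
    (Continuous.intervalIntegrable (by fun_prop) _ _)]
  field_simp
  simp only [mul_zero, exp_zero]
  ring

-- `a ↦ (exp (lam * a) - 1 - lam * a) / a ^ 2` is monotone, stated without division.
theorem sq_mul_exp_sub_one_sub_le {lam a b : ℝ} (hlam : 0 ≤ lam) (hab : a ≤ b) :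
    b ^ 2 * (exp (lam * a) - 1 - lam * a) ≤ a ^ 2 * (exp (lam * b) - 1 - lam * b) := by
  rw [exp_sub_one_sub_eq_sq_mul_integral, exp_sub_one_sub_eq_sq_mul_integral]
  have hmono : ∫ θ in (0 : ℝ)..1, (1 - θ) * exp (θ * (lam * a))
      ≤ ∫ θ in (0 : ℝ)..1, (1 - θ) * exp (θ * (lam * b)) := by
    refine intervalIntegral.integral_mono_on zero_le_one
      (Continuous.intervalIntegrable (by fun_prop) _ _)
      (Continuous.intervalIntegrable (by fun_prop) _ _) ?_
    intro θ ⟨hθ0, hθ1⟩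
    have : 0 ≤ 1 - θ := by linarith
    gcongr
  calc b ^ 2 * ((lam * a) ^ 2 * ∫ θ in (0 : ℝ)..1, (1 - θ) * exp (θ * (lam * a)))
      = (lam * a * b) ^ 2 * ∫ θ in (0 : ℝ)..1, (1 - θ) * exp (θ * (lam * a)) := by ring
    _ ≤ (lam * a * b) ^ 2 * ∫ θ in (0 : ℝ)..1, (1 - θ) * exp (θ * (lam * b)) := by gcongr
    _ = a ^ 2 * ((lam * b) ^ 2 * ∫ θ in (0 : ℝ)..1, (1 - θ) * exp (θ * (lam * b))) := by ring

namespace ExpMajorant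

/-- For `0 ≤ t`, the quadratic `a lam t + b lam t * x + c lam t * x ^ 2` touches `exp (lam * x)`
at `x = -t` and meets it again at `x = 1`. -/
noncomputable def c (lam t : ℝ) : ℝ :=
  (exp lam - exp (-(lam * t)) * (1 + lam * (1 + t))) / (1 + t) ^ 2

noncomputable def a (lam t : ℝ) : ℝ :=
  exp (-(lam * t)) * (1 + lam * t) + c lam t * t ^ 2

noncomputable def b (lam t : ℝ) : ℝ :=
  lam * exp (-(lam * t)) + 2 * t * c lam t

variable {lam t : ℝ}

theorem exp_mul_le (hlam : 0 ≤ lam) (ht : 0 ≤ t) {x : ℝ} (hx : x ≤ 1) :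
    exp (lam * x) ≤ a lam t + b lam t * x + c lam t * x ^ 2 := by
  have hbennett := sq_mul_exp_sub_one_sub_le hlam (by linarith : x + t ≤ 1 + t)
  have hx_eq : exp (lam * x) = exp (-(lam * t)) * exp (lam * (x + t)) := by
    rw [← exp_add]; ring_nf
  have hone_eq : exp lam = exp (-(lam * t)) * exp (lam * (1 + t)) := by
    rw [← exp_add]; ring_nf
  have hquad : a lam t + b lam t * x + c lam t * x ^ 2
      = exp (-(lam * t)) * (1 + lam * (x + t)) + c lam t * (x + t) ^ 2 := by
    unfold a b; ring
  rw [hquad, c, hx_eq, hone_eq, div_mul_eq_mul_div, ← sub_le_iff_le_add',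
    le_div_iff₀ (by positivity)]
  nlinarith [mul_le_mul_of_nonneg_left hbennett (exp_pos (-(lam * t))).le]

theorem c_nonneg (lam t : ℝ) : 0 ≤ c lam t := by
  have hone_eq : exp lam = exp (-(lam * t)) * exp (lam * (1 + t)) := by
    rw [← exp_add]; ring_nf
  rw [c, hone_eq, ← mul_sub]
  have := add_one_le_exp (lam * (1 + t))
  exact div_nonneg (mul_nonneg (exp_pos _).le (by linarith)) (sq_nonneg _)

theorem c_mul_sq_le (hlam : 0 ≤ lam) (ht : 0 ≤ t) : c lam t * (1 + t) ^ 2 ≤ exp lam := by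
  rw [c, div_mul_cancel₀ _ (by positivity)]
  have : 0 ≤ exp (-(lam * t)) * (1 + lam * (1 + t)) :=
    mul_nonneg (exp_pos _).le (by nlinarith)
  linarith

theorem b_nonneg (hlam : 0 ≤ lam) (ht : 0 ≤ t) : 0 ≤ b lam t := by
  have := c_nonneg lam t
  unfold b; positivity

theorem abs_a_le (hlam : 0 ≤ lam) (ht : 0 ≤ t) : |a lam t| ≤ 1 + exp lam := by
  have hc := c_nonneg lam t
  have hcsq := c_mul_sq_le hlam ht
  have hexp : exp (-(lam * t)) * (1 + lam * t) ≤ 1 := by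
    rw [← le_div_iff₀' (exp_pos _), exp_neg, one_div, inv_inv, add_comm]
    exact add_one_le_exp _
  rw [abs_of_nonneg (by unfold a; positivity)]
  unfold a
  nlinarith [mul_le_mul_of_nonneg_left (by nlinarith : t ^ 2 ≤ (1 + t) ^ 2) hc]

theorem abs_b_le (hlam : 0 ≤ lam) (ht : 0 ≤ t) : |b lam t| ≤ lam + exp lam := by
  have hc := c_nonneg lam t
  have hcsq := c_mul_sq_le hlam ht
  have hexp : exp (-(lam * t)) ≤ 1 := exp_le_one_iff.2 (by nlinarith)
  rw [abs_of_nonneg (b_nonneg hlam ht)]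
  unfold b
  nlinarith [mul_le_mul_of_nonneg_left (by nlinarith : 2 * t ≤ (1 + t) ^ 2) hc,
    mul_le_mul_of_nonneg_left hexp hlam]

theorem abs_c_le (hlam : 0 ≤ lam) (ht : 0 ≤ t) : |c lam t| ≤ exp lam := by
  have hc := c_nonneg lam t
  rw [abs_of_nonneg hc]
  nlinarith [c_mul_sq_le hlam ht, mul_le_mul_of_nonneg_left (by nlinarith : 1 ≤ (1 + t) ^ 2) hc]

theorem a_add_c_mul (ht : 0 ≤ t) :
    a lam t + c lam t * t = 1 / (1 + t) * exp (-(lam * t)) + t / (1 + t) * exp lam := by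
  have : (1 : ℝ) + t ≠ 0 := by positivity
  unfold a c
  field_simp
  ring

theorem measurable_a (lam : ℝ) : Measurable (a lam) := by
  unfold a c; fun_prop

theorem measurable_b (lam : ℝ) : Measurable (b lam) := by
  unfold b c; fun_prop

theorem measurable_c (lam : ℝ) : Measurable (c lam) := by
  unfold c; fun_prop

end ExpMajorant

theorem one_add_two_mul_mul_exp_le_exp_sq {s : ℝ} (hs : 0 ≤ s) :
    1 + 2 * s * exp s ≤ exp s ^ 2 := by
  have hsinh : s ≤ sinh s := self_le_sinh_iff.2 hs
  rw [sinh_eq, exp_neg] at hsinh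
  have hpos := exp_pos s
  field_simp at hsinh
  nlinarith

/-- The cumulant generating function of the centred law on `{-t, 1}` with variance `t`. -/
noncomputable def twoPointCgf (lam t : ℝ) : ℝ :=
  log (1 / (1 + t) * exp (-(lam * t)) + t / (1 + t) * exp lam)

theorem twoPointCgf_eq {lam t : ℝ} (ht : 0 ≤ t) :
    twoPointCgf lam t = log (exp (-(lam * t)) + t * exp lam) - log (1 + t) := by
  have hsum : 0 < exp (-(lam * t)) + t * exp lam := by positivity
  rw [twoPointCgf, ← log_div hsum.ne' (by positivity)]
  congr 1
  field_simp

-- The numerator of the second derivative of `twoPointCgf lam`, in terms of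
-- `g t = exp (-(lam * t)) + t * exp lam`.
theorem twoPointCgf_deriv2_numerator_nonpos {lam t : ℝ} (hlam : 0 ≤ lam) (ht : 0 ≤ t) :
    (lam ^ 2 * exp (-(lam * t)) * (exp (-(lam * t)) + t * exp lam)
        - (-lam * exp (-(lam * t)) + exp lam) ^ 2) * (1 + t) ^ 2
      + (exp (-(lam * t)) + t * exp lam) ^ 2 ≤ 0 := by
  set s := lam * (1 + t)
  have hs : 0 ≤ s := by positivity
  have hexp_lam : exp lam = exp (-(lam * t)) * exp s := by
    rw [← exp_add]; congr 1; ring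
  have htaylor : s ^ 2 + 2 * s + 2 ≤ 2 * exp s := by nlinarith [quadratic_le_exp_of_nonneg hs]
  have hsinh := one_add_two_mul_mul_exp_le_exp_sq hs
  have hnum : (lam ^ 2 * exp (-(lam * t)) * (exp (-(lam * t)) + t * exp lam)
        - (-lam * exp (-(lam * t)) + exp lam) ^ 2) * (1 + t) ^ 2
      + (exp (-(lam * t)) + t * exp lam) ^ 2
      = exp (-(lam * t)) ^ 2 * (t * exp s * (s ^ 2 + 2 * s + 2 - 2 * exp s)
        + (1 + 2 * s * exp s - exp s ^ 2)) := by
    simp only [s, hexp_lam]; ring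
  rw [hnum]
  have : 0 ≤ t * exp s * (2 * exp s - (s ^ 2 + 2 * s + 2)) :=
    mul_nonneg (by positivity) (by linarith)
  exact mul_nonpos_of_nonneg_of_nonpos (sq_nonneg _) (by linarith)

theorem concaveOn_twoPointCgf {lam : ℝ} (hlam : 0 ≤ lam) :
    ConcaveOn ℝ (Set.Ici 0) (twoPointCgf lam) := by
  set g : ℝ → ℝ := fun t => exp (-(lam * t)) + t * exp lam
  set g' : ℝ → ℝ := fun t => -lam * exp (-(lam * t)) + exp lam
  have hg_pos : ∀ t, 0 ≤ t → 0 < g t := fun t ht => by positivity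
  have hexp_deriv : ∀ t, HasDerivAt (fun t => exp (-(lam * t))) (-lam * exp (-(lam * t))) t :=
    fun t => by simpa [mul_comm] using (((hasDerivAt_id t).const_mul lam).neg).exp
  have hg : ∀ t, HasDerivAt g (g' t) t := fun t =>
    (hexp_deriv t).add (by simpa using (hasDerivAt_id t).mul_const (exp lam))
  have hg' : ∀ t, HasDerivAt g' (lam ^ 2 * exp (-(lam * t))) t := fun t =>
    (((hexp_deriv t).const_mul (-lam)).add_const (exp lam)).congr_deriv (by ring)
  have hlog : ∀ t, 0 < t → HasDerivAt (fun t : ℝ => log (1 + t)) (1 + t)⁻¹ t := fun t ht => by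
    simpa using ((hasDerivAt_id t).const_add 1).log (by positivity)
  refine ConcaveOn.congr ?_ (fun t ht => (twoPointCgf_eq (lam := lam) ht).symm)
  refine concaveOn_of_hasDerivWithinAt2_nonpos (convex_Ici 0)
    (f' := fun t => g' t / g t - (1 + t)⁻¹)
    (f'' := fun t => ((lam ^ 2 * exp (-(lam * t)) * g t - g' t ^ 2) * (1 + t) ^ 2 + g t ^ 2)
      / (g t ^ 2 * (1 + t) ^ 2)) ?_ ?_ ?_ ?_
  · refine ContinuousOn.sub (ContinuousOn.log (by fun_prop) fun t ht => (hg_pos t ht).ne')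
      (ContinuousOn.log (by fun_prop) fun t ht => ?_)
    have : (0 : ℝ) ≤ t := ht
    positivity
  · rw [interior_Ici]
    intro t (ht : 0 < t)
    exact (((hg t).log (hg_pos t ht.le).ne').sub (hlog t ht)).hasDerivWithinAt
  · rw [interior_Ici]
    intro t (ht : 0 < t)
    have hinv : HasDerivAt (fun t : ℝ => (1 + t)⁻¹) (-1 / (1 + t) ^ 2) t := by
      have hlin : HasDerivAt (fun t : ℝ => 1 + t) 1 t := by
        simpa using (hasDerivAt_id t).const_add 1
      exact hlin.inv (by positivity)
    refine (((hg' t).div (hg t) (hg_pos t ht.le).ne').sub hinv).congr_deriv ?_ |>.hasDerivWithinAt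
    have := (hg_pos t ht.le).ne'
    field_simp
    ring
  · rw [interior_Ici]
    intro t (ht : 0 < t)
    exact div_nonpos_of_nonpos_of_nonneg (twoPointCgf_deriv2_numerator_nonpos hlam ht.le)
      (by positivity)

theorem ConcaveOn.sum_le_card_mul_map_average {ι : Type*} {s : Set ℝ} {φ : ℝ → ℝ}
    (hφ : ConcaveOn ℝ s φ) {I : Finset ι} (hI : I.Nonempty) {v : ι → ℝ}
    (hv : ∀ i ∈ I, v i ∈ s) :
    ∑ i ∈ I, φ (v i) ≤ #I * φ ((∑ i ∈ I, v i) / #I) := by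
  have hcard : (0 : ℝ) < #I := by exact_mod_cast hI.card_pos
  have hjensen := hφ.le_map_sum (t := I) (w := fun _ => (#I : ℝ)⁻¹) (p := v)
    (fun _ _ => by positivity) (by simp [hcard.ne']) hv
  simp only [smul_eq_mul, inv_mul_eq_div, ← sum_div] at hjensen
  rwa [div_le_iff₀' hcard] at hjensen

section CondExp

variable {Ω : Type*} {m m₀ : MeasurableSpace Ω} {μ : Measure Ω}

theorem condExp_pos_of_pos (hm : m ≤ m₀) [SigmaFinite (μ.trim hm)] {f : Ω → ℝ}
    (hf : Integrable f μ) (hpos : ∀ᵐ ω ∂μ, 0 < f ω) : ∀ᵐ ω ∂μ, 0 < μ[f | m] ω := by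
  set A := {ω | μ[f | m] ω ≤ 0}
  have hA : MeasurableSet[m] A :=
    measurableSet_le stronglyMeasurable_condExp.measurable measurable_const
  have hint_nonpos : ∫ ω in A, f ω ∂μ ≤ 0 := by
    rw [← setIntegral_condExp hm hf hA]
    exact setIntegral_nonpos (hm _ hA) fun ω hω => hω
  have hf_zero : f =ᵐ[μ.restrict A] 0 :=
    (setIntegral_eq_zero_iff_of_nonneg_ae (ae_restrict_of_ae (hpos.mono fun ω h => h.le))
      hf.integrableOn).1 (le_antisymm hint_nonpos
        (setIntegral_nonneg_of_ae_restrict (ae_restrict_of_ae (hpos.mono fun ω h => h.le))))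
  have hA_null : ∀ᵐ ω ∂μ.restrict A, False := by
    filter_upwards [hf_zero, ae_restrict_of_ae hpos] with ω h0 hpos
    simp [h0] at hpos
  filter_upwards [(ae_restrict_iff' (hm _ hA)).1 hA_null] with ω hω
  exact not_le.1 hω

theorem condExp_le_of_le_quadratic [IsFiniteMeasure μ] (hm : m ≤ m₀) {f X a b c : Ω → ℝ}
    {Ka Kb Kc : ℝ} (hf : Integrable f μ) (hX : Integrable X μ)
    (hX2 : Integrable (fun ω => X ω ^ 2) μ) (ha : StronglyMeasurable[m] a)
    (hb : StronglyMeasurable[m] b) (hc : StronglyMeasurable[m] c)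
    (ha_bdd : ∀ᵐ ω ∂μ, ‖a ω‖ ≤ Ka) (hb_bdd : ∀ᵐ ω ∂μ, ‖b ω‖ ≤ Kb)
    (hc_bdd : ∀ᵐ ω ∂μ, ‖c ω‖ ≤ Kc)
    (hle : ∀ᵐ ω ∂μ, f ω ≤ a ω + b ω * X ω + c ω * X ω ^ 2) :
    ∀ᵐ ω ∂μ, μ[f | m] ω ≤ a ω + b ω * μ[X | m] ω + c ω * μ[fun ω => X ω ^ 2 | m] ω := by
  have ha_int : Integrable a μ := .of_bound (ha.mono hm).aestronglyMeasurable Ka ha_bdd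
  have hbX : Integrable (b * X) μ := hX.bdd_mul (hb.mono hm).aestronglyMeasurable hb_bdd
  have hcX2 : Integrable (c * fun ω => X ω ^ 2) μ :=
    hX2.bdd_mul (hc.mono hm).aestronglyMeasurable hc_bdd
  have hsplit : μ[a + b * X + c * (fun ω => X ω ^ 2) | m]
      =ᵐ[μ] a + b * μ[X | m] + c * μ[fun ω => X ω ^ 2 | m] := by
    refine (condExp_add (ha_int.add hbX) hcX2 m).trans (.add ?_ ?_)
    · refine (condExp_add ha_int hbX m).trans (.add ?_ ?_)
      · rw [condExp_of_stronglyMeasurable hm ha ha_int]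
      · exact condExp_stronglyMeasurable_mul_of_bound hm hb hX Kb hb_bdd
    · exact condExp_stronglyMeasurable_mul_of_bound hm hc hX2 Kc hc_bdd
  filter_upwards [condExp_mono (m := m) hf ((ha_int.add hbX).add hcX2) hle, hsplit]
    with ω hmono hω
  simpa [hω] using hmono

end CondExp

section SingleStep

variable {Ω : Type*} {m m₀ : MeasurableSpace Ω} {μ : Measure Ω} [IsFiniteMeasure μ]
  {X : Ω → ℝ} {lam : ℝ}

theorem integrable_exp_mul_of_le_one (hX : AEStronglyMeasurable X μ) (hX1 : ∀ᵐ ω ∂μ, X ω ≤ 1)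
    (hlam : 0 ≤ lam) : Integrable (fun ω => exp (lam * X ω)) μ := by
  refine .of_bound (continuous_exp.comp_aestronglyMeasurable (hX.const_mul lam)) (exp lam) ?_
  filter_upwards [hX1] with ω hω
  rw [norm_of_nonneg (exp_pos _).le, exp_le_exp]
  nlinarith

theorem condExp_exp_mul_le (hm : m ≤ m₀) (hX : Integrable X μ)
    (hX2 : Integrable (fun ω => X ω ^ 2) μ) (hsuper : ∀ᵐ ω ∂μ, μ[X | m] ω ≤ 0)
    (hX1 : ∀ᵐ ω ∂μ, X ω ≤ 1) (hlam : 0 ≤ lam) :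
    ∀ᵐ ω ∂μ, μ[fun ω => exp (lam * X ω) | m] ω
      ≤ 1 / (1 + μ[fun ω => X ω ^ 2 | m] ω) * exp (-(lam * μ[fun ω => X ω ^ 2 | m] ω))
        + μ[fun ω => X ω ^ 2 | m] ω / (1 + μ[fun ω => X ω ^ 2 | m] ω) * exp lam := by
  set v := μ[fun ω => X ω ^ 2 | m]
  have hv : Measurable[m] v := stronglyMeasurable_condExp.measurable
  have hv_nonneg : ∀ᵐ ω ∂μ, 0 ≤ v ω := condExp_nonneg (.of_forall fun ω => sq_nonneg _)
  have hquad := condExp_le_of_le_quadratic hm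
    (integrable_exp_mul_of_le_one hX.aestronglyMeasurable hX1 hlam) hX hX2
    ((ExpMajorant.measurable_a lam).comp hv).stronglyMeasurable
    ((ExpMajorant.measurable_b lam).comp hv).stronglyMeasurable
    ((ExpMajorant.measurable_c lam).comp hv).stronglyMeasurable
    (hv_nonneg.mono fun ω h => ExpMajorant.abs_a_le hlam h)
    (hv_nonneg.mono fun ω h => ExpMajorant.abs_b_le hlam h)
    (hv_nonneg.mono fun ω h => ExpMajorant.abs_c_le hlam h)
    (by filter_upwards [hX1, hv_nonneg] with ω hω hvω
        exact ExpMajorant.exp_mul_le hlam hvω hω)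
  filter_upwards [hquad, hsuper, hv_nonneg] with ω hquad hsuper hvω
  simp only [Function.comp_apply] at hquad
  rw [← ExpMajorant.a_add_c_mul hvω]
  nlinarith [mul_nonpos_of_nonneg_of_nonpos (ExpMajorant.b_nonneg hlam hvω) hsuper]

theorem log_condExp_exp_mul_le (hm : m ≤ m₀) (hX : Integrable X μ)
    (hX2 : Integrable (fun ω => X ω ^ 2) μ) (hsuper : ∀ᵐ ω ∂μ, μ[X | m] ω ≤ 0)
    (hX1 : ∀ᵐ ω ∂μ, X ω ≤ 1) (hlam : 0 ≤ lam) :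
    ∀ᵐ ω ∂μ, log (μ[fun ω => exp (lam * X ω) | m] ω)
      ≤ twoPointCgf lam (μ[fun ω => X ω ^ 2 | m] ω) := by
  filter_upwards [condExp_exp_mul_le hm hX hX2 hsuper hX1 hlam,
    condExp_pos_of_pos hm (integrable_exp_mul_of_le_one hX.aestronglyMeasurable hX1 hlam)
      (.of_forall fun ω => exp_pos _)] with ω hle hpos
  exact log_le_log hpos hle

end SingleStep

theorem cumulant_bound_general {Ω : Type*} [m : MeasurableSpace Ω] (μ : Measure Ω)
    [IsProbabilityMeasure μ] (n : ℕ) (ℱ : ℕ → MeasurableSpace Ω)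
    (hle : ∀ i, ℱ i ≤ m)
    (ξ : ℕ → Ω → ℝ)
    (hint : ∀ i, 1 ≤ i → i ≤ n → Integrable (ξ i) μ)
    (hint2 : ∀ i, 1 ≤ i → i ≤ n → Integrable (fun ω => (ξ i ω)^2) μ)
    (hsuper : ∀ i, 1 ≤ i → i ≤ n → ∀ᵐ ω ∂μ, (μ[ξ i | ℱ (i-1)]) ω ≤ 0)
    (hbound : ∀ i, 1 ≤ i → i ≤ n → ∀ᵐ ω ∂μ, ξ i ω ≤ 1)
    (lam : ℝ) (hlam : 0 ≤ lam) (k : ℕ) (hk1 : 1 ≤ k) (hkn : k ≤ n) :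
    ∀ᵐ ω ∂μ,
      ∑ i ∈ Finset.Icc 1 k,
          Real.log ((μ[fun ω' => Real.exp (lam * ξ i ω') | ℱ (i-1)]) ω)
        ≤ (k : ℝ) *
          Real.log ((1/(1 + (∑ i ∈ Finset.Icc 1 k, (μ[fun ω' => (ξ i ω')^2 | ℱ (i-1)]) ω) / k))
              * Real.exp (-(lam * ((∑ i ∈ Finset.Icc 1 k, (μ[fun ω' => (ξ i ω')^2 | ℱ (i-1)]) ω) / k)))
            + (((∑ i ∈ Finset.Icc 1 k, (μ[fun ω' => (ξ i ω')^2 | ℱ (i-1)]) ω) / k)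
                / (1 + (∑ i ∈ Finset.Icc 1 k, (μ[fun ω' => (ξ i ω')^2 | ℱ (i-1)]) ω) / k))
              * Real.exp lam) := by
  have hstep : ∀ i ∈ Icc 1 k, ∀ᵐ ω ∂μ,
      log (μ[fun ω' => exp (lam * ξ i ω') | ℱ (i - 1)] ω)
        ≤ twoPointCgf lam (μ[fun ω' => ξ i ω' ^ 2 | ℱ (i - 1)] ω)
      ∧ 0 ≤ μ[fun ω' => ξ i ω' ^ 2 | ℱ (i - 1)] ω := by
    intro i hi
    obtain ⟨hi1, hik⟩ := mem_Icc.1 hi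
    have hin : i ≤ n := hik.trans hkn
    have hv_nonneg : ∀ᵐ ω ∂μ, 0 ≤ μ[fun ω' => ξ i ω' ^ 2 | ℱ (i - 1)] ω :=
      condExp_nonneg (.of_forall fun ω => sq_nonneg _)
    filter_upwards [log_condExp_exp_mul_le (hle _) (hint i hi1 hin) (hint2 i hi1 hin)
        (hsuper i hi1 hin) (hbound i hi1 hin) hlam, hv_nonneg] with ω hlog hvω
    exact ⟨hlog, hvω⟩
  filter_upwards [(eventually_all_finset _).2 hstep] with ω hω
  have hcard : (#(Icc 1 k) : ℝ) = k := by simp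
  calc ∑ i ∈ Icc 1 k, log (μ[fun ω' => exp (lam * ξ i ω') | ℱ (i - 1)] ω)
      ≤ ∑ i ∈ Icc 1 k, twoPointCgf lam (μ[fun ω' => ξ i ω' ^ 2 | ℱ (i - 1)] ω) :=
        sum_le_sum fun i hi => (hω i hi).1
    _ ≤ k * twoPointCgf lam ((∑ i ∈ Icc 1 k, μ[fun ω' => ξ i ω' ^ 2 | ℱ (i - 1)] ω) / k) := by
        rw [← hcard]
        exact (concaveOn_twoPointCgf hlam).sum_le_card_mul_map_average
          (nonempty_Icc.2 hk1) fun i hi => (hω i hi).2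

theorem cumulant_bound {Ω : Type*} [m : MeasurableSpace Ω] (μ : Measure Ω)
    [IsProbabilityMeasure μ] (n : ℕ) (ℱ : ℕ → MeasurableSpace Ω)
    (hmono : Monotone ℱ) (hle : ∀ i, ℱ i ≤ m)
    (ξ : ℕ → Ω → ℝ)
    (hadapt : ∀ i, 1 ≤ i → i ≤ n → Measurable[ℱ i] (ξ i))
    (hint : ∀ i, 1 ≤ i → i ≤ n → Integrable (ξ i) μ)
    (hint2 : ∀ i, 1 ≤ i → i ≤ n → Integrable (fun ω => (ξ i ω)^2) μ)
    (hsuper : ∀ i, 1 ≤ i → i ≤ n → ∀ᵐ ω ∂μ, (μ[ξ i | ℱ (i-1)]) ω ≤ 0)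
    (hbound : ∀ i, 1 ≤ i → i ≤ n → ∀ᵐ ω ∂μ, ξ i ω ≤ 1)
    (lam : ℝ) (hlam : 0 ≤ lam) (k : ℕ) (hk1 : 1 ≤ k) (hkn : k ≤ n) :
    ∀ᵐ ω ∂μ,
      ∑ i ∈ Finset.Icc 1 k,
          Real.log ((μ[fun ω' => Real.exp (lam * ξ i ω') | ℱ (i-1)]) ω)
        ≤ (k : ℝ) *
          Real.log ((1/(1 + (∑ i ∈ Finset.Icc 1 k, (μ[fun ω' => (ξ i ω')^2 | ℱ (i-1)]) ω) / k))
              * Real.exp (-(lam * ((∑ i ∈ Finset.Icc 1 k, (μ[fun ω' => (ξ i ω')^2 | ℱ (i-1)]) ω) / k)))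
            + (((∑ i ∈ Finset.Icc 1 k, (μ[fun ω' => (ξ i ω')^2 | ℱ (i-1)]) ω) / k)
                / (1 + (∑ i ∈ Finset.Icc 1 k, (μ[fun ω' => (ξ i ω')^2 | ℱ (i-1)]) ω) / k))
              * Real.exp lam) :=
  cumulant_bound_general (m := m) μ n ℱ hle ξ hint hint2 hsuper hbound lam hlam k hk1 hkn
end

section
/- For all x ≥ 0, v > 0 and n ≥ 1 with x ≤ n, H_n(x,v) ≤ F(x,v), where H_n(x,v) = {(v²/(x+v²))^{x+v²}(n/(n−x))^{n−x}}^{n/(n+v²)} and F(x,v) = (v²/(x+v²))^{x+v²}·e^x. -/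
/-!
After taking logarithms the claim is linear in the two terms `n (n - x) log (n / (n - x))`
and `(x + v²) v² log ((x + v²) / v²)`. Both are instances of `a b log (a / b) ≤ (a² - b²) / 2`
for `0 ≤ b ≤ a`, which is `u ≤ sinh u` at `u = log (a / b)`, and the `x² / 2` terms of the
two bounds cancel.
-/

open Real

lemma mul_mul_log_div_le {a b : ℝ} (hb : 0 ≤ b) (hba : b ≤ a) :
    a * b * log (a / b) ≤ (a ^ 2 - b ^ 2) / 2 := by
  rcases hb.eq_or_lt with rfl | hb
  · simp only [mul_zero, zero_mul]
    nlinarith [sq_nonneg a]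
  have ha : 0 < a := hb.trans_le hba
  have hlog : log (a / b) ≤ (a / b - (a / b)⁻¹) / 2 := by
    rw [← sinh_log (div_pos ha hb)]
    exact self_le_sinh_iff.mpr (log_nonneg ((one_le_div hb).mpr hba))
  calc a * b * log (a / b) ≤ a * b * ((a / b - (a / b)⁻¹) / 2) := by gcongr
    _ = (a ^ 2 - b ^ 2) / 2 := by field_simp

-- For `b = 0` both sides are `1`, since `0 ^ 0 = 1` and `0 * log (a / 0) = 0`.
lemma div_rpow_self_eq_exp {a b : ℝ} (hb : 0 ≤ b) (hba : b ≤ a) :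
    (a / b) ^ b = exp (b * log (a / b)) := by
  rcases hb.eq_or_lt with rfl | hb
  · simp
  rw [rpow_def_of_pos (div_pos (hb.trans_le hba) hb), mul_comm]

lemma log_hoeffding_le_log_freedman {x s n : ℝ} (hx : 0 ≤ x) (hs : 0 < s) (hxn : x ≤ n) :
    ((x + s) * log (s / (x + s)) + (n - x) * log (n / (n - x))) * (n / (n + s))
      ≤ (x + s) * log (s / (x + s)) + x := by
  have hn := mul_mul_log_div_le (a := n) (b := n - x) (by linarith) (by linarith)
  have hxs := mul_mul_log_div_le (a := x + s) (b := s) hs.le (by linarith)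
  rw [← neg_neg (log (s / (x + s))), ← log_inv, inv_div, mul_div_assoc',
    div_le_iff₀ (by linarith)]
  linarith

theorem H_le_F_general (x v : ℝ) (hx : 0 ≤ x) (hv : 0 < v) (n : ℕ) (hxn : x ≤ (n:ℝ)) :
    ((v^2/(x+v^2)) ^ (x+v^2) * ((n:ℝ)/((n:ℝ)-x)) ^ ((n:ℝ)-x)) ^ ((n:ℝ)/((n:ℝ)+v^2))
      ≤ (v^2/(x+v^2)) ^ (x+v^2) * Real.exp x := by
  have hs : 0 < v ^ 2 := by positivity
  have hv_term : (v ^ 2 / (x + v ^ 2)) ^ (x + v ^ 2)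
      = exp ((x + v ^ 2) * log (v ^ 2 / (x + v ^ 2))) := by
    rw [rpow_def_of_pos (by positivity), mul_comm]
  rw [hv_term, div_rpow_self_eq_exp (by linarith) (by linarith), ← exp_add, ← exp_mul,
    ← exp_add]
  exact exp_le_exp.mpr (log_hoeffding_le_log_freedman hx hs hxn)

theorem H_le_F (x v : ℝ) (hx : 0 ≤ x) (hv : 0 < v) (n : ℕ) (hn : 1 ≤ n) (hxn : x ≤ (n:ℝ)) :
    ((v^2/(x+v^2)) ^ (x+v^2) * ((n:ℝ)/((n:ℝ)-x)) ^ ((n:ℝ)-x)) ^ ((n:ℝ)/((n:ℝ)+v^2))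
      ≤ (v^2/(x+v^2)) ^ (x+v^2) * Real.exp x :=
  H_le_F_general x v hx hv n hxn
end

section
/- For all x ≥ 0 and v > 0, (v²/(x+v²))^{x+v²}·e^x ≤ exp{−x²/(v²(1+√(1+2x/(3v²))) + x/3)}. -/
open Real

/-!
Put `u = x / v²` and `s = √(1 + 2u/3)`. The left side equals `exp (-v² h(u))` with Bennett's
function `h(u) = (1 + u) log (1 + u) - u`, while, since `u = 3(s² - 1)/2`, the exponent on the
right simplifies to `-(9/2) v² (s - 1)²`. So the claim is `(9/2) (s - 1)² ≤ h(u)` for `u ≥ 0`.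
Both sides vanish at `u = 0`; differentiating twice reduces this to `1 + u ≤ s³`, which in
terms of `s` reads `(s - 1)² (2s + 1) ≥ 0`.
-/

noncomputable def bennettH (u : ℝ) : ℝ := (1 + u) * log (1 + u) - u

lemma le_of_hasDerivAt_nonneg {f f' : ℝ → ℝ} {a b : ℝ} (hab : a ≤ b)
    (hf : ∀ t, a ≤ t → HasDerivAt f (f' t) t) (hf' : ∀ t, a < t → 0 ≤ f' t) : f a ≤ f b := by
  refine monotoneOn_of_hasDerivWithinAt_nonneg (f' := f') (convex_Ici a)
    (fun t ht ↦ (hf t ht).continuousAt.continuousWithinAt) (fun t ht ↦ ?_) (fun t ht ↦ ?_)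
    Set.self_mem_Ici hab hab
  · rw [interior_Ici] at ht
    exact (hf t ht.le).hasDerivWithinAt
  · rw [interior_Ici] at ht
    exact hf' t ht

lemma hasDerivAt_bennettH {t : ℝ} (ht : -1 < t) : HasDerivAt bennettH (log (1 + t)) t := by
  have h1 : HasDerivAt (fun t ↦ 1 + t) 1 t := (hasDerivAt_id' t).const_add 1
  have h1t : 1 + t ≠ 0 := by linarith
  refine ((h1.mul (h1.log h1t)).sub (hasDerivAt_id' t)).congr_deriv ?_
  field_simp
  ring

lemma hasDerivAt_sqrt_one_add_two_mul_div_three {t : ℝ} (ht : 0 < 1 + 2 * t / 3) :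
    HasDerivAt (fun t ↦ √(1 + 2 * t / 3)) (1 / (3 * √(1 + 2 * t / 3))) t := by
  refine (((((hasDerivAt_id' t).const_mul 2).div_const 3).const_add 1).sqrt
    ht.ne').congr_deriv ?_
  field_simp

lemma one_add_le_sqrt_one_add_two_mul_div_three_pow_three {t : ℝ} (ht : 0 ≤ 1 + 2 * t / 3) :
    1 + t ≤ √(1 + 2 * t / 3) ^ 3 := by
  set s := √(1 + 2 * t / 3)
  have hs : 0 ≤ s := sqrt_nonneg _
  have hts : t = 3 * (s ^ 2 - 1) / 2 := by rw [sq_sqrt ht]; ring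
  rw [hts]
  nlinarith [mul_nonneg (sq_nonneg (s - 1)) (by linarith : 0 ≤ 2 * s + 1)]

lemma three_sub_three_div_sqrt_le_log_one_add {u : ℝ} (hu : 0 ≤ u) :
    3 - 3 / √(1 + 2 * u / 3) ≤ log (1 + u) := by
  suffices 3 / √(1 + 2 * 0 / 3) + log (1 + 0) ≤ 3 / √(1 + 2 * u / 3) + log (1 + u) by
    simpa [add_comm, sub_le_iff_le_add] using this
  refine le_of_hasDerivAt_nonneg (f := fun t ↦ 3 / √(1 + 2 * t / 3) + log (1 + t))
    (f' := fun t ↦ 1 / (1 + t) - 1 / √(1 + 2 * t / 3) ^ 3) hu (fun t ht ↦ ?_) (fun t ht ↦ ?_)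
  · have hpos : 0 < 1 + 2 * t / 3 := by linarith
    have hs : 0 < √(1 + 2 * t / 3) := sqrt_pos.2 hpos
    refine (((hasDerivAt_const t 3).div (hasDerivAt_sqrt_one_add_two_mul_div_three hpos)
      hs.ne').add (((hasDerivAt_id' t).const_add 1).log (by linarith))).congr_deriv ?_
    field_simp
    ring
  · exact sub_nonneg.2 (one_div_le_one_div_of_le (by linarith)
      (one_add_le_sqrt_one_add_two_mul_div_three_pow_three (by linarith)))

lemma nine_div_two_mul_sq_le_bennettH {u : ℝ} (hu : 0 ≤ u) :
    9 / 2 * (√(1 + 2 * u / 3) - 1) ^ 2 ≤ bennettH u := by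
  suffices bennettH 0 - 9 / 2 * (√(1 + 2 * 0 / 3) - 1) ^ 2 ≤
      bennettH u - 9 / 2 * (√(1 + 2 * u / 3) - 1) ^ 2 by
    simpa [bennettH] using this
  refine le_of_hasDerivAt_nonneg (f := fun t ↦ bennettH t - 9 / 2 * (√(1 + 2 * t / 3) - 1) ^ 2)
    (f' := fun t ↦ log (1 + t) - (3 - 3 / √(1 + 2 * t / 3))) hu (fun t ht ↦ ?_)
    (fun t ht ↦ sub_nonneg.2 (three_sub_three_div_sqrt_le_log_one_add ht.le))
  have hpos : 0 < 1 + 2 * t / 3 := by linarith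
  refine ((hasDerivAt_bennettH (by linarith)).sub
    ((((hasDerivAt_sqrt_one_add_two_mul_div_three hpos).sub_const 1).pow 2).const_mul
      (9 / 2))).congr_deriv ?_
  field_simp
  ring

lemma div_add_rpow_mul_exp_eq {a x : ℝ} (ha : 0 < a) (hxa : 0 < x + a) :
    (a / (x + a)) ^ (x + a) * exp x = exp (-(a * bennettH (x / a))) := by
  have hlog : log (a / (x + a)) = -log (1 + x / a) := by
    rw [← inv_div, log_inv, add_div, div_self ha.ne', add_comm]
  rw [rpow_def_of_pos (div_pos ha hxa), ← exp_add, hlog, bennettH]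
  congr 1
  field_simp
  ring

lemma sq_div_add_eq_mul_sq_sqrt_sub_one {a x : ℝ} (ha : 0 < a) (hx : 0 ≤ 1 + 2 * x / (3 * a)) :
    x ^ 2 / (a * (1 + √(1 + 2 * x / (3 * a))) + x / 3)
      = a * (9 / 2 * (√(1 + 2 * (x / a) / 3) - 1) ^ 2) := by
  have harg : 1 + 2 * (x / a) / 3 = 1 + 2 * x / (3 * a) := by ring
  rw [harg]
  set s := √(1 + 2 * x / (3 * a))
  have hxs : x = 3 * a * (s ^ 2 - 1) / 2 := by rw [sq_sqrt hx]; field_simp; ring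
  have hden : a * (1 + s) + x / 3 = a * (1 + s) ^ 2 / 2 := by rw [hxs]; ring
  rw [hden, div_eq_iff (by positivity), hxs]
  ring

theorem F_le_B1 (x v : ℝ) (hx : 0 ≤ x) (hv : 0 < v) :
    (v^2/(x+v^2)) ^ (x+v^2) * Real.exp x
      ≤ Real.exp (-(x^2 / (v^2 * (1 + Real.sqrt (1 + 2*x/(3*v^2))) + x/3))) := by
  have hv2 : 0 < v ^ 2 := by positivity
  rw [div_add_rpow_mul_exp_eq hv2 (by positivity),
    sq_div_add_eq_mul_sq_sqrt_sub_one hv2 (by positivity), exp_le_exp, neg_le_neg_iff]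
  exact mul_le_mul_of_nonneg_left (nine_div_two_mul_sq_le_bennettH (by positivity)) hv2.le
end

section
/- For fixed x > 0 and v > 0, the sequence n ↦ H_n(x,v) is nondecreasing in n (for n ≥ x), and lim_{n→∞} H_n(x,v) = (v²/(x+v²))^{x+v²}·e^x. -/
/-!
Write `a = v²` and `K = (x + a) log (a / (x + a))`. For real `t ≥ x`,
`log H_t = t / (t + a) · (K + (t - x) log (t / (t - x)))`, whose derivative is
`(a K + L (a (2t - x) + t²) - x (t + a)) / (t + a)²` with `L = log (t / (t - x))`.
The numerator is nonnegative by the two sharp logarithm estimates `L ≥ 2x / (2t - x)` and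
`K ≥ -x - x² / (2a)` (the latter is `s ≤ sinh s` at `s = log ((x + a) / a)`), so `H` increases.
The limit follows from `t / (t + a) → 1` and `(t - x) log (t / (t - x)) → x`.
-/

open Real Filter Topology Set

lemma two_mul_div_le_log_div_sub {x t : ℝ} (hx : 0 ≤ x) (hxt : x < t) :
    2 * x / (2 * t - x) ≤ log (t / (t - x)) := by
  have hs : 0 < t - x := sub_pos.2 hxt
  have h := le_log_one_add_of_nonneg (div_nonneg hx hs.le)
  have e1 : 1 + x / (t - x) = t / (t - x) := by field_simp; ring
  have e2 : 2 * (x / (t - x)) / (x / (t - x) + 2) = 2 * x / (2 * t - x) := by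
    have hu : 2 * t - x ≠ 0 := by linarith
    field_simp
    ring
  rwa [e1, e2] at h

lemma neg_le_mul_log_div_add {x a : ℝ} (hx : 0 ≤ x) (ha : 0 < a) :
    -(x + x ^ 2 / (2 * a)) ≤ (x + a) * log (a / (x + a)) := by
  have hxa : 0 < x + a := by linarith
  have hz : 0 < (x + a) / a := by positivity
  have hsinh := self_le_sinh_iff.2 (log_nonneg ((one_le_div ha).2 (by linarith : a ≤ x + a)))
  rw [sinh_eq, exp_neg, exp_log hz] at hsinh
  have e : (x + a) * (((x + a) / a - ((x + a) / a)⁻¹) / 2) = x + x ^ 2 / (2 * a) := by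
    field_simp; ring
  rw [← inv_div (x + a) a, log_inv]
  nlinarith [mul_le_mul_of_nonneg_left hsinh hxa.le]

/-- `log H_n(x, v)` with `a = v²` and the index `n` replaced by a real variable `t`. -/
noncomputable def logH (x a t : ℝ) : ℝ :=
  t / (t + a) * ((x + a) * log (a / (x + a)) + (t - x) * log (t / (t - x)))

lemma rpow_eq_exp_logH {x a t : ℝ} (hx : 0 < x) (ha : 0 < a) (ht : x ≤ t) :
    ((a / (x + a)) ^ (x + a) * (t / (t - x)) ^ (t - x)) ^ (t / (t + a)) = exp (logH x a t) := by
  have hb : 0 < a / (x + a) := by positivity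
  have hc : 0 < (a / (x + a)) ^ (x + a) := rpow_pos_of_pos hb _
  rcases ht.eq_or_lt with rfl | hlt
  · simp [logH, rpow_def_of_pos hc, log_rpow hb, mul_comm]
  · have hq : 0 < t / (t - x) := div_pos (hx.trans hlt) (sub_pos.2 hlt)
    have hp : 0 < (t / (t - x)) ^ (t - x) := rpow_pos_of_pos hq _
    rw [rpow_def_of_pos (mul_pos hc hp), log_mul hc.ne' hp.ne', log_rpow hb, log_rpow hq, logH,
      mul_comm]

lemma continuousOn_logH {x a : ℝ} (hx : 0 < x) (ha : 0 < a) :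
    ContinuousOn (logH x a) (Ici x) := by
  set K := (x + a) * log (a / (x + a))
  have hEq : EqOn (fun t => t / (t + a) * (K + ((t - x) * log t - (t - x) * log (t - x))))
      (logH x a) (Ici x) := by
    intro t (ht : x ≤ t)
    rcases ht.eq_or_lt with rfl | hlt
    · simp [logH, K]
    · rw [logH, log_div (hx.trans hlt).ne' (sub_pos.2 hlt).ne', mul_sub]
  refine ContinuousOn.congr ?_ hEq.symm
  have hlog : ContinuousOn log (Ici x) :=
    continuousOn_log.mono fun t (ht : x ≤ t) => (hx.trans_le ht).ne'
  have hmul : Continuous fun t => (t - x) * log (t - x) :=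
    continuous_mul_log.comp (continuous_sub_right x)
  refine (continuousOn_id.div (continuousOn_id.add continuousOn_const) ?_).mul
    (continuousOn_const.add
      (((continuousOn_id.sub continuousOn_const).mul hlog).sub hmul.continuousOn))
  exact fun t (ht : x ≤ t) => (show 0 < t + a by linarith).ne'

lemma hasDerivAt_logH {x a t : ℝ} (hx : 0 < x) (ha : 0 < a) (ht : x < t) :
    HasDerivAt (logH x a)
      ((a * ((x + a) * log (a / (x + a))) + log (t / (t - x)) * (a * (2 * t - x) + t ^ 2)
        - x * (t + a)) / (t + a) ^ 2) t := by
  have ht0 : 0 < t := hx.trans ht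
  have hs : 0 < t - x := sub_pos.2 ht
  have hq : HasDerivAt (fun t => t / (t - x)) ((1 * (t - x) - t * 1) / (t - x) ^ 2) t :=
    (hasDerivAt_id' t).div ((hasDerivAt_id' t).sub_const x) hs.ne'
  refine (((hasDerivAt_id' t).div ((hasDerivAt_id' t).add_const a) (by positivity)).mul
    ((((hasDerivAt_id' t).sub_const x).mul (hq.log (by positivity))).const_add
      ((x + a) * log (a / (x + a))))).congr_deriv ?_
  simp only [Pi.div_apply, Pi.mul_apply]
  field_simp
  ring

lemma logH_deriv_numerator_nonneg {x a t K L : ℝ} (hx : 0 < x) (ha : 0 < a) (ht : x < t)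
    (hK : -(x + x ^ 2 / (2 * a)) ≤ K) (hL : 2 * x / (2 * t - x) ≤ L) :
    0 ≤ a * K + L * (a * (2 * t - x) + t ^ 2) - x * (t + a) := by
  have hu : 0 < 2 * t - x := by linarith
  have haK : -(a * x) - x ^ 2 / 2 ≤ a * K := by
    have := mul_le_mul_of_nonneg_left hK ha.le
    field_simp at this ⊢
    linarith
  rw [div_le_iff₀ hu] at hL
  have hcoef : 0 ≤ a * (2 * t - x) + t ^ 2 := by positivity
  -- With both estimates inserted, the numerator is still at least `x³ / (2 (2t - x))`.
  refine nonneg_of_mul_nonneg_left ?_ hu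
  nlinarith [mul_le_mul_of_nonneg_right hL hcoef, pow_pos hx 3]

lemma monotoneOn_logH {x a : ℝ} (hx : 0 < x) (ha : 0 < a) : MonotoneOn (logH x a) (Ici x) := by
  refine monotoneOn_of_deriv_nonneg (convex_Ici x) (continuousOn_logH hx ha) ?_ ?_ <;>
    rw [interior_Ici]
  · exact fun t ht => (hasDerivAt_logH hx ha ht).differentiableAt.differentiableWithinAt
  · intro t ht
    rw [(hasDerivAt_logH hx ha ht).deriv]
    have := logH_deriv_numerator_nonneg hx ha ht (neg_le_mul_log_div_add hx.le ha)
      (two_mul_div_le_log_div_sub hx.le ht)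
    positivity

lemma tendsto_logH_natCast (x a : ℝ) :
    Tendsto (fun n : ℕ => logH x a n) atTop (𝓝 ((x + a) * log (a / (x + a)) + x)) := by
  have hsub : Tendsto (fun t : ℝ => (t - x) * log (t / (t - x))) atTop (𝓝 x) := by
    refine ((tendsto_mul_log_one_add_div_atTop x).comp
      (tendsto_atTop_add_const_right _ (-x) tendsto_id)).congr' ?_
    filter_upwards [eventually_gt_atTop x] with t ht
    have : 1 + x / (t - x) = t / (t - x) := by field_simp [(sub_pos.2 ht).ne']; ring
    simp only [Function.comp_apply, id, ← sub_eq_add_neg, this]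
  simpa [logH] using (tendsto_natCast_div_add_atTop a).mul
    (tendsto_const_nhds.add (hsub.comp tendsto_natCast_atTop_atTop))

theorem H_mono_and_tendsto (x v : ℝ) (hx : 0 < x) (hv : 0 < v) :
    (∀ n m : ℕ, x ≤ (n:ℝ) → n ≤ m →
      ((v^2/(x+v^2)) ^ (x+v^2) * ((n:ℝ)/((n:ℝ)-x)) ^ ((n:ℝ)-x)) ^ ((n:ℝ)/((n:ℝ)+v^2))
        ≤ ((v^2/(x+v^2)) ^ (x+v^2) * ((m:ℝ)/((m:ℝ)-x)) ^ ((m:ℝ)-x)) ^ ((m:ℝ)/((m:ℝ)+v^2)))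
    ∧ Tendsto (fun n : ℕ =>
        ((v^2/(x+v^2)) ^ (x+v^2) * ((n:ℝ)/((n:ℝ)-x)) ^ ((n:ℝ)-x)) ^ ((n:ℝ)/((n:ℝ)+v^2)))
        atTop (nhds ((v^2/(x+v^2)) ^ (x+v^2) * Real.exp x)) := by
  have ha : 0 < v ^ 2 := by positivity
  refine ⟨fun n m hn hnm => ?_, ?_⟩
  · have hnm' : (n : ℝ) ≤ m := by exact_mod_cast hnm
    rw [rpow_eq_exp_logH hx ha hn, rpow_eq_exp_logH hx ha (hn.trans hnm')]
    exact exp_le_exp.2 (monotoneOn_logH hx ha hn (hn.trans hnm') hnm')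
  · have hlim : (v ^ 2 / (x + v ^ 2)) ^ (x + v ^ 2) * exp x
        = exp ((x + v ^ 2) * log (v ^ 2 / (x + v ^ 2)) + x) := by
      rw [exp_add, rpow_def_of_pos (by positivity), mul_comm (log _)]
    rw [hlim]
    refine ((continuous_exp.tendsto _).comp (tendsto_logH_natCast x _)).congr' ?_
    filter_upwards [eventually_ge_atTop ⌈x⌉₊] with n hn
    exact (rpow_eq_exp_logH hx ha (Nat.ceil_le.1 hn)).symm
end

section
/- inf over λ ∈ [0,3) of exp{−λx + λ²v²/(2(1 − λ/3))} equals exp{−x²/(v²(1+√(1+2x/(3v²))) + x/3)} for every x ≥ 0 and v > 0. -/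
/-!
Put `t = 1 - λ/3 ∈ (0, 1]` and `u = √(1 + 2x/(3v²)) ≥ 1`, so that `x = 3v²(u² - 1)/2`. Then the
exponent equals `-(9v²/2)(u - 1)² + (9v²/2)(tu - 1)²/t`, which is minimal exactly at `t = 1/u`,
i.e. at `λ = 3 - 3/u ∈ [0, 3)`. The minimum `-(9v²/2)(u - 1)²` is the claimed value, since
`v²(1 + u) + x/3 = v²(u + 1)²/2`.
-/

open Real Set

noncomputable def bennettExponent (x v lam : ℝ) : ℝ :=
  -(lam * x) + lam ^ 2 * v ^ 2 / (2 * (1 - lam / 3))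

section

variable {x v u : ℝ}

lemma bennettExponent_eq (hx : x = 3 * v ^ 2 * (u ^ 2 - 1) / 2) {lam : ℝ} (hlam : lam ≠ 3) :
    bennettExponent x v lam =
      -(9 * v ^ 2 / 2) * (u - 1) ^ 2 + 9 * v ^ 2 / 2 * ((1 - lam / 3) * u - 1) ^ 2 / (1 - lam / 3) := by
  have ht : 1 - lam / 3 ≠ 0 := by contrapose! hlam; linarith
  unfold bennettExponent
  rw [hx]
  field_simp
  ring

lemma isLeast_bennettExponent (hx : x = 3 * v ^ 2 * (u ^ 2 - 1) / 2) (hu : 1 ≤ u) :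
    IsLeast (bennettExponent x v '' Ico 0 3) (-(9 * v ^ 2 / 2) * (u - 1) ^ 2) := by
  have hpos : 0 < 3 / u := by positivity
  refine ⟨⟨3 - 3 / u, ⟨?_, by linarith⟩, ?_⟩, ?_⟩
  · linarith [div_le_self (by norm_num : (0 : ℝ) ≤ 3) hu]
  · rw [bennettExponent_eq hx (by linarith)]
    field_simp
    ring
  · rintro _ ⟨lam, ⟨-, hlam3⟩, rfl⟩
    have ht : 0 < 1 - lam / 3 := by linarith
    rw [bennettExponent_eq hx hlam3.ne]
    have : 0 ≤ 9 * v ^ 2 / 2 * ((1 - lam / 3) * u - 1) ^ 2 / (1 - lam / 3) := by positivity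
    linarith

lemma bennett_rate_eq (hx : x = 3 * v ^ 2 * (u ^ 2 - 1) / 2) (hv : v ≠ 0) (hu : 0 ≤ u) :
    x ^ 2 / (v ^ 2 * (1 + u) + x / 3) = 9 * v ^ 2 / 2 * (u - 1) ^ 2 := by
  have hden : v ^ 2 * (1 + u) + x / 3 = v ^ 2 * (u + 1) ^ 2 / 2 := by rw [hx]; ring
  have : v ^ 2 * (u + 1) ^ 2 ≠ 0 := by positivity
  rw [hden, hx]
  field_simp
  ring

end

theorem inf_bennett (x v : ℝ) (hx : 0 ≤ x) (hv : 0 < v) :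
    sInf {y : ℝ | ∃ lam : ℝ, 0 ≤ lam ∧ lam < 3 ∧
        y = Real.exp (-(lam * x) + lam^2 * v^2 / (2 * (1 - lam/3)))}
      = Real.exp (-(x^2 / (v^2 * (1 + Real.sqrt (1 + 2*x/(3*v^2))) + x/3))) := by
  set u := √(1 + 2 * x / (3 * v ^ 2))
  have hu : 1 ≤ u := one_le_sqrt.mpr (by simp only [le_add_iff_nonneg_right]; positivity)
  have hxu : x = 3 * v ^ 2 * (u ^ 2 - 1) / 2 := by
    rw [sq_sqrt (by positivity)]; field_simp; ring
  have hset : {y : ℝ | ∃ lam : ℝ, 0 ≤ lam ∧ lam < 3 ∧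
      y = Real.exp (-(lam * x) + lam^2 * v^2 / (2 * (1 - lam/3)))} =
      exp '' (bennettExponent x v '' Ico 0 3) := by
    ext y
    simp [bennettExponent, eq_comm, and_assoc]
  rw [hset, bennett_rate_eq hxu hv.ne' (by linarith), neg_mul_eq_neg_mul]
  exact (exp_monotone.map_isLeast (isLeast_bennettExponent hxu hu)).csInf_eq
end

section
/- Let (ξ_i, F_i)_{i=1,...,n} be supermartingale differences with ξ_i ≤ 1 a.s. Then for all x ≥ 0 and v > 0, P(X_k ≥ x/3 + v√(2x) and ⟨X⟩_k ≤ v² for some k ∈ [1,n]) ≤ e^{−x}. -/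
open MeasureTheory Real Finset

/-! For `a ≥ 0` write `φ a = exp a - a - 1`. The elementary bound
`exp (a t) ≤ 1 + a t + φ a t²` for `t ≤ 1`, combined with `E[ξ_i | F_{i-1}] ≤ 0`, gives
`E[exp (a ξ_i) | F_{i-1}] ≤ exp (φ a E[ξ_i² | F_{i-1}])`, so `Z_k = exp (a X_k - φ a ⟨X⟩_k)` is a
positive supermartingale with `Z_0 = 1`. On the event in question some `Z_k` is at least
`exp (a (x/3 + v √(2x)) - φ a v²)`, and Ville's maximal inequality bounds the probability of this
by the reciprocal. Finally `φ a ≤ a² / (2 (1 - a/3))`, and for `a = √(2x) / (v + √(2x)/3)` the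
exponent is at least `x`. -/

lemma hasSum_exp_sub_sub_one (a : ℝ) :
    HasSum (fun n : ℕ ↦ a ^ (n + 2) / (n + 2).factorial) (exp a - a - 1) := by
  simpa [sum_range_succ, ← Real.exp_eq_exp_ℝ, sub_sub, add_comm] using
    (hasSum_nat_add_iff' 2).2 (NormedSpace.expSeries_div_hasSum_exp a)

lemma exp_sub_sub_one_nonneg (a : ℝ) : 0 ≤ exp a - a - 1 := by
  linarith [add_one_le_exp a]

lemma exp_le_one_add_add_sq_div_two_of_nonpos {s : ℝ} (hs : s ≤ 0) :
    exp s ≤ 1 + s + s ^ 2 / 2 := by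
  have hderiv : ∀ t, HasDerivAt (fun t ↦ exp t - t - t ^ 2 / 2) (exp t - 1 - t) t := fun t ↦
    (((hasDerivAt_exp t).sub (hasDerivAt_id' t)).sub
      ((hasDerivAt_pow 2 t).div_const 2)).congr_deriv (by norm_num)
  have hmono : Monotone fun t ↦ exp t - t - t ^ 2 / 2 :=
    monotone_of_deriv_nonneg (fun t ↦ (hderiv t).differentiableAt) fun t ↦ by
      rw [(hderiv t).deriv]
      linarith [add_one_le_exp t]
  have := hmono hs
  simp only [exp_zero] at this
  linarith

lemma exp_sub_sub_one_le_of_lt_three {a : ℝ} (ha : 0 ≤ a) (ha3 : a < 3) :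
    exp a - a - 1 ≤ a ^ 2 / (2 * (1 - a / 3)) := by
  have hgeom := (hasSum_geometric_of_lt_one (by positivity : 0 ≤ a / 3) (by linarith)).mul_left
    (a ^ 2 / 2)
  refine (hasSum_le (fun n ↦ ?_) (hasSum_exp_sub_sub_one a) hgeom).trans_eq (by field_simp)
  have hfact : 2 * 3 ^ n ≤ (n + 2).factorial := by
    simpa [add_comm] using Nat.factorial_mul_pow_le_factorial (m := 2) (n := n)
  calc a ^ (n + 2) / (n + 2).factorial ≤ a ^ (n + 2) / (2 * 3 ^ n) := by
        gcongr
        exact_mod_cast hfact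
    _ = a ^ 2 / 2 * (a / 3) ^ n := by rw [div_pow]; field_simp; ring

lemma exp_mul_le_one_add_mul_add_mul_sq {a t : ℝ} (ha : 0 ≤ a) (ht : t ≤ 1) :
    exp (a * t) ≤ 1 + a * t + (exp a - a - 1) * t ^ 2 := by
  rcases le_total t 0 with ht0 | ht0
  · have hsq : a ^ 2 / 2 ≤ exp a - a - 1 := by linarith [quadratic_le_exp_of_nonneg ha]
    have := exp_le_one_add_add_sq_div_two_of_nonpos (mul_nonpos_of_nonneg_of_nonpos ha ht0)
    nlinarith [sq_nonneg t]
  · suffices exp (a * t) - a * t - 1 ≤ (exp a - a - 1) * t ^ 2 by linarith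
    refine hasSum_le (fun n ↦ ?_) (hasSum_exp_sub_sub_one (a * t))
      ((hasSum_exp_sub_sub_one a).mul_right (t ^ 2))
    rw [mul_pow, div_mul_eq_mul_div]
    have := pow_le_pow_of_le_one ht0 ht (Nat.le_add_left 2 n)
    gcongr

lemma exists_bennett_exponent {x v : ℝ} (hx : 0 ≤ x) (hv : 0 < v) :
    ∃ a, 0 ≤ a ∧ x ≤ a * (x / 3 + v * √(2 * x)) - (exp a - a - 1) * v ^ 2 := by
  set s := √(2 * x)
  have hs : 0 ≤ s := sqrt_nonneg _
  have hx_eq : x = s ^ 2 / 2 := by rw [sq_sqrt (by linarith)]; ring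
  set w := v + s / 3 with hw_def
  have hw : 0 < w := by positivity
  refine ⟨s / w, by positivity, ?_⟩
  have hφ := exp_sub_sub_one_le_of_lt_three (a := s / w) (by positivity)
    (by rw [div_lt_iff₀ hw]; linarith)
  rw [show 1 - s / w / 3 = v / w by field_simp; linarith] at hφ
  have hexact : s / w * (x / 3 + v * s) - (s / w) ^ 2 / (2 * (v / w)) * v ^ 2 = x := by
    rw [hx_eq, hw_def]
    field_simp
    ring
  linarith [mul_le_mul_of_nonneg_right hφ (sq_nonneg v)]

section Probability

variable {Ω : Type*} {m m0 : MeasurableSpace Ω} {μ : Measure Ω}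

/-- Ville's maximal inequality, by optional stopping at the first time `f` reaches `c`. -/
theorem MeasureTheory.Supermartingale.mul_measureReal_exists_le_le [IsFiniteMeasure μ]
    {𝒢 : Filtration ℕ m0} {f : ℕ → Ω → ℝ} (hf : Supermartingale f 𝒢 μ) (hnonneg : 0 ≤ f)
    (c : ℝ) (n : ℕ) :
    c * μ.real {ω | ∃ k ≤ n, c ≤ f k ω} ≤ ∫ ω, f 0 ω ∂μ := by
  set τ : Ω → WithTop ℕ := fun ω ↦ (hittingBtwn f {y | c ≤ y} 0 n ω : ℕ)
  have hτ : IsStoppingTime 𝒢 τ :=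
    hf.stronglyAdapted.adapted.isStoppingTime_hittingBtwn measurableSet_Ici
  have hτn : ∀ ω, τ ω ≤ n := fun ω ↦ WithTop.coe_le_coe.2 (hittingBtwn_le ω)
  have hint : Integrable (stoppedValue f τ) μ := integrable_stoppedValue ℕ hτ hf.integrable hτn
  have hmeas : MeasurableSet {ω | ∃ k ≤ n, c ≤ f k ω} := by
    simp only [Set.ofPred_exists, Set.ofPred_and]
    exact .iUnion fun k ↦ (MeasurableSet.const _).inter <|
      measurableSet_le measurable_const ((hf.stronglyMeasurable k).measurable.mono (𝒢.le k) le_rfl)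
  calc c * μ.real {ω | ∃ k ≤ n, c ≤ f k ω}
      ≤ ∫ ω in {ω | ∃ k ≤ n, c ≤ f k ω}, stoppedValue f τ ω ∂μ := by
        refine setIntegral_ge_of_const_le_real hmeas (measure_ne_top μ _)
          (fun ω ⟨k, hk, hck⟩ ↦ ?_) hint.integrableOn
        exact stoppedValue_hittingBtwn_mem ⟨k, ⟨Nat.zero_le k, hk⟩, hck⟩
    _ ≤ ∫ ω, stoppedValue f τ ω ∂μ :=
        setIntegral_le_integral hint (.of_forall fun ω ↦ hnonneg _ _)
    _ ≤ ∫ ω, f 0 ω ∂μ := by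
        have := hf.neg.expected_stoppedValue_mono (isStoppingTime_const 𝒢 0) hτ
          (fun ω ↦ bot_le) hτn
        rwa [stoppedValue_neg, stoppedValue_neg, integral_neg', integral_neg', neg_le_neg_iff]
          at this

lemma integrable_exp_mul_of_ae_le_one [IsFiniteMeasure μ] {a : ℝ} (ha : 0 ≤ a) {ξ : Ω → ℝ}
    (hξ : AEStronglyMeasurable ξ μ) (hbound : ξ ≤ᵐ[μ] 1) :
    Integrable (fun ω ↦ exp (a * ξ ω)) μ := by
  refine .mono' (integrable_const (exp a))
    (continuous_exp.comp_aestronglyMeasurable (hξ.const_mul a)) ?_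
  filter_upwards [hbound] with ω hω
  rw [norm_of_nonneg (exp_pos _).le, exp_le_exp]
  exact mul_le_of_le_one_right ha hω

lemma condExp_exp_mul_le_s15 [IsFiniteMeasure μ] (hm : m ≤ m0) {a : ℝ} (ha : 0 ≤ a) {ξ : Ω → ℝ}
    (hint : Integrable ξ μ) (hint2 : Integrable (fun ω ↦ ξ ω ^ 2) μ)
    (hsuper : μ[ξ | m] ≤ᵐ[μ] 0) (hbound : ξ ≤ᵐ[μ] 1) :
    μ[fun ω ↦ exp (a * ξ ω) | m] ≤ᵐ[μ]
      fun ω ↦ exp ((exp a - a - 1) * μ[fun ω ↦ ξ ω ^ 2 | m] ω) := by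
  set φ := exp a - a - 1
  have hquad_int : Integrable ((fun _ ↦ 1) + a • ξ + φ • fun ω ↦ ξ ω ^ 2) μ :=
    ((integrable_const 1).add (hint.smul a)).add (hint2.smul φ)
  have hpointwise : (fun ω ↦ exp (a * ξ ω)) ≤ᵐ[μ] (fun _ ↦ 1) + a • ξ + φ • fun ω ↦ ξ ω ^ 2 := by
    filter_upwards [hbound] with ω hω using exp_mul_le_one_add_mul_add_mul_sq ha hω
  filter_upwards [condExp_mono (m := m)
      (integrable_exp_mul_of_ae_le_one ha hint.aestronglyMeasurable hbound) hquad_int hpointwise,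
    condExp_add ((integrable_const 1).add (hint.smul a)) (hint2.smul φ) m,
    condExp_add (integrable_const 1) (hint.smul a) m, condExp_smul a ξ m,
    condExp_smul φ (fun ω ↦ ξ ω ^ 2) m, hsuper] with ω hmono hadd hadd' hsmul hsmul' hneg
  simp only [hadd, Pi.add_apply, hadd', hsmul, hsmul', condExp_const hm, Pi.smul_apply,
    smul_eq_mul] at hmono
  calc μ[fun ω ↦ exp (a * ξ ω) | m] ω ≤ 1 + φ * μ[fun ω ↦ ξ ω ^ 2 | m] ω := by
        nlinarith [mul_nonpos_of_nonneg_of_nonpos ha hneg]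
    _ ≤ _ := by linarith [add_one_le_exp (φ * μ[fun ω ↦ ξ ω ^ 2 | m] ω)]

noncomputable def bennettProcess (μ : Measure Ω) (𝒢 : Filtration ℕ m0) (ξ : ℕ → Ω → ℝ) (a : ℝ)
    (k : ℕ) (ω : Ω) : ℝ :=
  exp (a * ∑ i ∈ Icc 1 k, ξ i ω
    - (exp a - a - 1) * ∑ i ∈ Icc 1 k, μ[fun ω' ↦ ξ i ω' ^ 2 | 𝒢 (i - 1)] ω)

variable {𝒢 : Filtration ℕ m0} {ξ : ℕ → Ω → ℝ} {a : ℝ}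

@[simp]
lemma bennettProcess_zero (ω : Ω) : bennettProcess μ 𝒢 ξ a 0 ω = 1 := by
  simp [bennettProcess]

lemma bennettProcess_pos (k : ℕ) (ω : Ω) : 0 < bennettProcess μ 𝒢 ξ a k ω := exp_pos _

lemma bennettProcess_succ (k : ℕ) (ω : Ω) :
    bennettProcess μ 𝒢 ξ a (k + 1) ω = bennettProcess μ 𝒢 ξ a k ω
      * exp (-((exp a - a - 1) * μ[fun ω' ↦ ξ (k + 1) ω' ^ 2 | 𝒢 k] ω))
      * exp (a * ξ (k + 1) ω) := by
  simp only [bennettProcess, ← exp_add, sum_Icc_succ_top (Nat.le_add_left 1 k),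
    Nat.add_sub_cancel]
  ring_nf

lemma stronglyAdapted_bennettProcess (hadapt : ∀ i, 1 ≤ i → Measurable[𝒢 i] (ξ i)) :
    StronglyAdapted 𝒢 (bennettProcess μ 𝒢 ξ a) := fun k ↦ by
  refine (Measurable.exp (.sub (.const_mul ?_ a) (.const_mul ?_ _))).stronglyMeasurable
  · refine Finset.measurable_sum _ fun i hi ↦ ?_
    exact (hadapt i (mem_Icc.1 hi).1).mono (𝒢.mono (mem_Icc.1 hi).2) le_rfl
  · refine Finset.measurable_sum _ fun i hi ↦ ?_
    exact stronglyMeasurable_condExp.measurable.mono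
      (𝒢.mono ((Nat.sub_le i 1).trans (mem_Icc.1 hi).2)) le_rfl

lemma bennettProcess_le_exp (hbound : ∀ i, 1 ≤ i → ξ i ≤ᵐ[μ] 1) (ha : 0 ≤ a) (k : ℕ) :
    ∀ᵐ ω ∂μ, bennettProcess μ 𝒢 ξ a k ω ≤ exp (a * k) := by
  have hbound' : ∀ᵐ ω ∂μ, ∀ i ∈ Icc 1 k, ξ i ω ≤ 1 :=
    (ae_ball_iff (Finset.countable_toSet _)).2 fun i hi ↦ hbound i (mem_Icc.1 hi).1
  have hnonneg : ∀ᵐ ω ∂μ, ∀ i, 0 ≤ μ[fun ω' ↦ ξ i ω' ^ 2 | 𝒢 (i - 1)] ω :=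
    ae_all_iff.2 fun i ↦ condExp_nonneg (.of_forall fun ω ↦ sq_nonneg _)
  filter_upwards [hbound', hnonneg] with ω hξ hc
  have hsum : ∑ i ∈ Icc 1 k, ξ i ω ≤ k := by simpa using sum_le_sum hξ
  have hquad : 0 ≤ ∑ i ∈ Icc 1 k, μ[fun ω' ↦ ξ i ω' ^ 2 | 𝒢 (i - 1)] ω :=
    sum_nonneg fun i _ ↦ hc i
  refine exp_le_exp.2 ?_
  linarith [mul_nonneg (exp_sub_sub_one_nonneg a) hquad, mul_le_mul_of_nonneg_left hsum ha]

theorem supermartingale_bennettProcess [IsFiniteMeasure μ]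
    (hadapt : ∀ i, 1 ≤ i → Measurable[𝒢 i] (ξ i)) (hint : ∀ i, 1 ≤ i → Integrable (ξ i) μ)
    (hint2 : ∀ i, 1 ≤ i → Integrable (fun ω ↦ ξ i ω ^ 2) μ)
    (hsuper : ∀ i, 1 ≤ i → μ[ξ i | 𝒢 (i - 1)] ≤ᵐ[μ] 0) (hbound : ∀ i, 1 ≤ i → ξ i ≤ᵐ[μ] 1)
    (ha : 0 ≤ a) :
    Supermartingale (bennettProcess μ 𝒢 ξ a) 𝒢 μ := by
  have hadapted := stronglyAdapted_bennettProcess (μ := μ) (a := a) hadapt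
  have hint_Z : ∀ k, Integrable (bennettProcess μ 𝒢 ξ a k) μ := fun k ↦
    .mono' (integrable_const (exp (a * k))) ((hadapted k).mono (𝒢.le k)).aestronglyMeasurable
      (by filter_upwards [bennettProcess_le_exp (𝒢 := 𝒢) hbound ha k] with ω hω
          rwa [norm_of_nonneg (bennettProcess_pos k ω).le])
  refine supermartingale_nat hadapted hint_Z fun k ↦ ?_
  set W : Ω → ℝ := fun ω ↦ bennettProcess μ 𝒢 ξ a k ω
      * exp (-((exp a - a - 1) * μ[fun ω' ↦ ξ (k + 1) ω' ^ 2 | 𝒢 k] ω))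
  have hW : StronglyMeasurable[𝒢 k] W :=
    ((hadapted k).measurable.mul
      (stronglyMeasurable_condExp.measurable.const_mul _).neg.exp).stronglyMeasurable
  have hsplit : bennettProcess μ 𝒢 ξ a (k + 1) = W * fun ω ↦ exp (a * ξ (k + 1) ω) :=
    funext (bennettProcess_succ k)
  have hsuper' := hsuper (k + 1) k.succ_pos
  rw [Nat.add_sub_cancel] at hsuper'
  have hint_succ := hint_Z (k + 1)
  rw [hsplit] at hint_succ ⊢
  filter_upwards [condExp_mul_of_stronglyMeasurable_left hW hint_succ
      (integrable_exp_mul_of_ae_le_one ha (hint (k + 1) k.succ_pos).aestronglyMeasurable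
        (hbound (k + 1) k.succ_pos)),
    condExp_exp_mul_le_s15 (𝒢.le k) ha (hint (k + 1) k.succ_pos) (hint2 (k + 1) k.succ_pos) hsuper'
      (hbound (k + 1) k.succ_pos)] with ω hpull hmgf
  rw [hpull, Pi.mul_apply]
  calc W ω * μ[fun ω ↦ exp (a * ξ (k + 1) ω) | 𝒢 k] ω
      ≤ W ω * exp ((exp a - a - 1) * μ[fun ω' ↦ ξ (k + 1) ω' ^ 2 | 𝒢 k] ω) :=
        mul_le_mul_of_nonneg_left hmgf (mul_pos (bennettProcess_pos k ω) (exp_pos _)).le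
    _ = bennettProcess μ 𝒢 ξ a k ω := by simp only [W, mul_assoc, ← exp_add]; simp

end Probability

theorem bennett_form_supermartingale {Ω : Type*} [m : MeasurableSpace Ω] (μ : Measure Ω)
    [IsProbabilityMeasure μ] (n : ℕ) (ℱ : ℕ → MeasurableSpace Ω)
    (hmono : Monotone ℱ) (hle : ∀ i, ℱ i ≤ m)
    (ξ : ℕ → Ω → ℝ)
    (hadapt : ∀ i, 1 ≤ i → i ≤ n → Measurable[ℱ i] (ξ i))
    (hint : ∀ i, 1 ≤ i → i ≤ n → Integrable (ξ i) μ)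
    (hint2 : ∀ i, 1 ≤ i → i ≤ n → Integrable (fun ω => (ξ i ω)^2) μ)
    (hsuper : ∀ i, 1 ≤ i → i ≤ n → ∀ᵐ ω ∂μ, (μ[ξ i | ℱ (i-1)]) ω ≤ 0)
    (hbound : ∀ i, 1 ≤ i → i ≤ n → ∀ᵐ ω ∂μ, ξ i ω ≤ 1)
    (x v : ℝ) (hx : 0 ≤ x) (hv : 0 < v) :
    μ {ω | ∃ k, 1 ≤ k ∧ k ≤ n ∧
          x/3 + v * Real.sqrt (2*x) ≤ ∑ i ∈ Finset.Icc 1 k, ξ i ω ∧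
          ∑ i ∈ Finset.Icc 1 k, (μ[fun ω' => (ξ i ω')^2 | ℱ (i-1)]) ω ≤ v^2}
      ≤ ENNReal.ofReal (Real.exp (-x)) := by
  obtain ⟨a, ha, hxa⟩ := exists_bennett_exponent hx hv
  let 𝒢 : Filtration ℕ m := ⟨ℱ, hmono, hle⟩
  -- Extended by zero after time `n`, the differences satisfy the hypotheses at every time.
  let ζ : ℕ → Ω → ℝ := fun i ↦ if i ≤ n then ξ i else 0
  have hZ : Supermartingale (bennettProcess μ 𝒢 ζ a) 𝒢 μ := by
    refine supermartingale_bennettProcess (fun i hi ↦ ?_) (fun i hi ↦ ?_) (fun i hi ↦ ?_)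
      (fun i hi ↦ ?_) (fun i hi ↦ ?_) ha <;>
      by_cases hin : i ≤ n <;> simp only [ζ, hin, if_true, if_false]
    exacts [hadapt i hi hin, measurable_const, hint i hi hin, integrable_zero _ _ _,
      hint2 i hi hin, by simp, hsuper i hi hin, by simp [Filter.EventuallyLE.refl],
      hbound i hi hin, .of_forall fun _ ↦ zero_le_one]
  have hsubset : {ω | ∃ k, 1 ≤ k ∧ k ≤ n ∧
      x/3 + v * Real.sqrt (2*x) ≤ ∑ i ∈ Finset.Icc 1 k, ξ i ω ∧
      ∑ i ∈ Finset.Icc 1 k, (μ[fun ω' => (ξ i ω')^2 | ℱ (i-1)]) ω ≤ v^2}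
      ⊆ {ω | ∃ k ≤ n, exp x ≤ bennettProcess μ 𝒢 ζ a k ω} := by
    rintro ω ⟨k, -, hkn, hsum, hquad⟩
    have hζ : ∀ i ∈ Icc 1 k, ζ i = ξ i := fun i hi ↦ if_pos ((mem_Icc.1 hi).2.trans hkn)
    refine ⟨k, hkn, exp_le_exp.2 (hxa.trans ?_)⟩
    rw [sum_congr rfl fun i hi ↦ congrFun (hζ i hi) ω,
      sum_congr rfl fun i hi ↦ congrArg (fun f ↦ μ[fun ω' ↦ f ω' ^ 2 | ℱ (i - 1)] ω) (hζ i hi)]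
    linarith [mul_le_mul_of_nonneg_left hsum ha,
      mul_le_mul_of_nonneg_left hquad (exp_sub_sub_one_nonneg a)]
  have hville := hZ.mul_measureReal_exists_le_le (fun k ω ↦ (bennettProcess_pos k ω).le) (exp x) n
  simp only [bennettProcess_zero, integral_const, probReal_univ, smul_eq_mul, mul_one] at hville
  refine (measure_mono hsubset).trans <|
    (ENNReal.le_ofReal_iff_toReal_le (measure_ne_top _ _) (exp_pos _).le).2 ?_
  rwa [exp_neg, inv_eq_one_div, le_div_iff₀' (exp_pos x)]
end
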